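/- arXiv:1310.7877 — 11 statements merged into one kernel-verified Lean document; each statement's English description precedes it below -/
import Mathlib

section
/- The kernel of P equals the image of Q; that is, a vector y ∈ ℤ^{2(k+1)} satisfies P(y) = 0 if and only if y = Q(x) for some x ∈ ℤ^{k+1}. -/
/-!
Both `ker P` and `im Q` consist of the pairs `(a, -a)` with `∑ a = 0`: for `im Q` because a
sequence on the cycle `ℤ/(k+1)` has zero sum exactly when it is the difference sequence
`x_{j+1} - x_j` of some `x`, namely of its partial sums.
-/

/-- The map `Q : ℤ^{k+1} → ℤ^{2(k+1)}` sending the `i`-th standard basis vector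
(`0 ≤ i ≤ k`) to the vector with entry `+1` in coordinates `a_{i-1}` and `b_i`, entry `-1`
in coordinates `a_i` and `b_{i-1}`, and `0` elsewhere (indices read modulo `k+1`).
The first component of the output records the `a`-coordinates and the second the
`b`-coordinates; explicitly `(Q x)_{a_j} = x_{j+1} - x_j` and `(Q x)_{b_j} = x_j - x_{j+1}`. -/
def Qmap (k : ℕ) (x : Fin (k + 1) → ℤ) : (Fin (k + 1) → ℤ) × (Fin (k + 1) → ℤ) :=
  (fun j => x (j + 1) - x j, fun j => x j - x (j + 1))

/-- The map `P : ℤ^{2(k+1)} → ℤ^{k+3}` sending the basis vector `a_i` to the vector with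
`u = 1`, `v = 0`, `z_i = 1`, rest `0`, and `b_i` to the vector with `u = 0`, `v = 1`,
`z_i = 1`, rest `0`.  The target is written as `ℤ × ℤ × (Fin (k+1) → ℤ)`, with the
coordinates `(u, v, z)`. -/
def Pmap (k : ℕ) (y : (Fin (k + 1) → ℤ) × (Fin (k + 1) → ℤ)) :
    ℤ × ℤ × (Fin (k + 1) → ℤ) :=
  (∑ i, y.1 i, ∑ i, y.2 i, fun i => y.1 i + y.2 i)

namespace Fin

theorem partialSum_last {M : Type*} [AddCommMonoid M] {n : ℕ} (f : Fin n → M) :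
    partialSum f (last n) = ∑ i, f i := by
  rw [partialSum, val_last, List.take_of_length_le (by simp), List.sum_ofFn]

variable {M : Type*} [AddCommGroup M] {n : ℕ}

theorem sum_sub_comp_add_one (x : Fin (n + 1) → M) : ∑ j, (x (j + 1) - x j) = 0 := by
  rw [Finset.sum_sub_distrib, sub_eq_zero]
  exact Fintype.sum_equiv (Equiv.addRight 1) _ _ fun _ => rfl

theorem partialSum_init_add_one_sub {a : Fin (n + 1) → M} (ha : ∑ j, a j = 0) (j : Fin (n + 1)) :
    partialSum (init a) (j + 1) - partialSum (init a) j = a j := by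
  induction j using lastCases with
  | last =>
    -- the difference wraps around: `x_0 - x_n = -(a_0 + ⋯ + a_{n-1}) = a_n`
    have hsum : partialSum a (last n).castSucc + a (last n) = 0 := by
      rw [← partialSum_succ, succ_last, partialSum_last, ha]
    rw [last_add_one, partialSum_zero, partialSum_init, zero_sub, neg_eq_iff_eq_neg,
      eq_neg_iff_add_eq_zero, hsum]
  | cast i =>
    rw [coeSucc_eq_succ, partialSum_init, partialSum_init, ← succ_castSucc, partialSum_succ,
      add_sub_cancel_left]

theorem exists_eq_sub_comp_add_one_iff (a : Fin (n + 1) → M) :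
    (∃ x : Fin (n + 1) → M, ∀ j, a j = x (j + 1) - x j) ↔ ∑ j, a j = 0 := by
  constructor
  · rintro ⟨x, hx⟩
    simp only [hx, sum_sub_comp_add_one]
  · intro ha
    exact ⟨partialSum (init a), fun j => (partialSum_init_add_one_sub ha j).symm⟩

end Fin

theorem Pmap_eq_zero_iff (k : ℕ) (y : (Fin (k + 1) → ℤ) × (Fin (k + 1) → ℤ)) :
    Pmap k y = 0 ↔ ∑ i, y.1 i = 0 ∧ y.2 = -y.1 := by
  simp only [Pmap, Prod.mk_eq_zero, funext_iff, Pi.zero_apply, Pi.neg_apply,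
    add_eq_zero_iff_eq_neg']
  constructor
  · exact fun ⟨h1, _, h3⟩ => ⟨h1, h3⟩
  · rintro ⟨h1, h3⟩
    refine ⟨h1, ?_, h3⟩
    simp only [h3, Finset.sum_neg_distrib, h1, neg_zero]

theorem eq_Qmap_iff (k : ℕ) (y : (Fin (k + 1) → ℤ) × (Fin (k + 1) → ℤ)) (x : Fin (k + 1) → ℤ) :
    y = Qmap k x ↔ (∀ j, y.1 j = x (j + 1) - x j) ∧ y.2 = -y.1 := by
  simp only [Qmap, Prod.ext_iff, funext_iff, Pi.neg_apply]
  constructor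
  · rintro ⟨h1, h2⟩
    exact ⟨h1, fun j => by rw [h1, h2, neg_sub]⟩
  · rintro ⟨h1, h2⟩
    exact ⟨h1, fun j => by rw [h2, h1, neg_sub]⟩

theorem stmt1_general (k : ℕ) (y : (Fin (k + 1) → ℤ) × (Fin (k + 1) → ℤ)) :
    Pmap k y = 0 ↔ ∃ x : Fin (k + 1) → ℤ, y = Qmap k x := by
  simp only [eq_Qmap_iff, exists_and_right, Fin.exists_eq_sub_comp_add_one_iff, Pmap_eq_zero_iff]

/-- The kernel of `P` equals the image of `Q`. -/
theorem stmt1 (k : ℕ) (hk : 1 ≤ k) (y : (Fin (k + 1) → ℤ) × (Fin (k + 1) → ℤ)) :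
    Pmap k y = 0 ↔ ∃ x : Fin (k + 1) → ℤ, y = Qmap k x :=
  stmt1_general k y
end

section
/- Let M ⊆ ℕ^{k+1} × ℕ^{k+1} be the set of pairs (α, β) such that α_{i−1} + β_i = α_i + β_{i−1} for every i ∈ {0,…,k} (indices read modulo k+1). Then M is a submonoid of ℕ^{k+1} × ℕ^{k+1} under addition, and M equals the submonoid generated by the k+3 elements ((1,1,…,1),(0,0,…,0)), ((0,0,…,0),(1,1,…,1)), and (e_i, e_i) for i ∈ {0,…,k}, where e_i denotes the i-th standard basis vector of ℕ^{k+1}. (This encodes that the torus-invariant functions on the quiver representation space are generated by u = a_0⋯a_k, v = b_0⋯b_k and z_i = a_i b_i, so the affine quotient is the universal unfolding uv = z_0⋯z_k of the A_k surface singularity.) -/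
/-!
Going once around the cycle, the relations `α_{i-1} + β_i = α_i + β_{i-1}` say exactly that the
integer `c = α_i - β_i` does not depend on `i`. If `c ≥ 0` then
`(α, β) = c • (1, 0) + ∑ i, β_i • (e_i, e_i)`, and if `c ≤ 0` then
`(α, β) = (-c) • (0, 1) + ∑ i, α_i • (e_i, e_i)`; conversely the generators satisfy the relations,
which are additive.
-/

theorem Fin.apply_eq_apply_zero_of_forall_apply_sub_one {α : Type*} {n : ℕ}
    (f : Fin (n + 1) → α) (h : ∀ i, f (i - 1) = f i) (i : Fin (n + 1)) : f i = f 0 := by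
  induction i using Fin.induction with
  | zero => rfl
  | succ j ih => rw [← h, ← Fin.coeSucc_eq_succ, add_sub_cancel_right, ih]

section

variable (ι : Type*)

def constDiffPairs : AddSubmonoid ((ι → ℕ) × (ι → ℕ)) where
  carrier := {p | ∀ i j, p.1 i + p.2 j = p.1 j + p.2 i}
  zero_mem' _ _ := rfl
  add_mem' {p q} hp hq i j := by
    simp only [Prod.fst_add, Prod.snd_add, Pi.add_apply]
    have := hp i j
    have := hq i j
    omega

variable {ι} [DecidableEq ι] [Finite ι]

theorem pair_self_mem_closure_range_single (γ : ι → ℕ) :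
    (γ, γ) ∈ AddSubmonoid.closure
      (Set.range fun i => ((Pi.single i 1 : ι → ℕ), (Pi.single i 1 : ι → ℕ))) := by
  induction γ using Pi.single_induction with
  | zero => exact zero_mem _
  | add f g hf hg => exact add_mem hf hg
  | single i m =>
    have hsmul : ((Pi.single i m : ι → ℕ), (Pi.single i m : ι → ℕ)) =
        m • ((Pi.single i 1 : ι → ℕ), (Pi.single i 1 : ι → ℕ)) := by
      simp [← Pi.single_smul']
    rw [hsmul]
    exact nsmul_mem (AddSubmonoid.subset_closure (Set.mem_range_self i)) m

theorem closure_eq_constDiffPairs [Nonempty ι] :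
    AddSubmonoid.closure ({(1, 0), (0, 1)} ∪
      Set.range fun i => ((Pi.single i 1 : ι → ℕ), (Pi.single i 1 : ι → ℕ))) =
      constDiffPairs ι := by
  refine le_antisymm (AddSubmonoid.closure_le.2 ?_) fun p hp => ?_
  · rintro _ ((rfl | rfl) | ⟨i, rfl⟩) <;> intro j j'
    · rfl
    · rfl
    · exact add_comm _ _
  · obtain ⟨α, β⟩ := p
    obtain ⟨i₀⟩ := ‹Nonempty ι›
    have mem_of_diag (γ : ι → ℕ) : (γ, γ) ∈ AddSubmonoid.closure ({(1, 0), (0, 1)} ∪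
        Set.range fun i => ((Pi.single i 1 : ι → ℕ), (Pi.single i 1 : ι → ℕ))) :=
      AddSubmonoid.closure_mono Set.subset_union_right (pair_self_mem_closure_range_single γ)
    rcases le_total (β i₀) (α i₀) with hle | hle
    · have hdecomp : (α, β) = (α i₀ - β i₀) • ((1 : ι → ℕ), (0 : ι → ℕ)) + (β, β) := by
        ext j
        · have : α j + β i₀ = α i₀ + β j := hp j i₀
          simp only [Prod.fst_add, Prod.smul_fst, Pi.add_apply, Pi.smul_apply, Pi.one_apply,
            smul_eq_mul, mul_one]
          omega
        · simp
      rw [hdecomp]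
      exact add_mem (nsmul_mem (AddSubmonoid.subset_closure (by simp)) _) (mem_of_diag β)
    · have hdecomp : (α, β) = (β i₀ - α i₀) • ((0 : ι → ℕ), (1 : ι → ℕ)) + (α, α) := by
        ext j
        · simp
        · have : α j + β i₀ = α i₀ + β j := hp j i₀
          simp only [Prod.snd_add, Prod.smul_snd, Pi.add_apply, Pi.smul_apply, Pi.one_apply,
            smul_eq_mul, mul_one]
          omega
      rw [hdecomp]
      exact add_mem (nsmul_mem (AddSubmonoid.subset_closure (by simp)) _) (mem_of_diag α)

end

theorem Fin.add_eq_add_of_forall_add_sub_one {n : ℕ} {α β : Fin (n + 1) → ℕ}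
    (h : ∀ i, α (i - 1) + β i = α i + β (i - 1)) (i j : Fin (n + 1)) :
    α i + β j = α j + β i := by
  have hconst := Fin.apply_eq_apply_zero_of_forall_apply_sub_one (fun i => (α i : ℤ) - β i)
    (fun i => by have := h i; omega)
  have := hconst i
  have := hconst j
  omega

theorem stmt5_general (k : ℕ) :
    {p : (Fin (k + 1) → ℕ) × (Fin (k + 1) → ℕ) |
        ∀ i, p.1 (i - 1) + p.2 i = p.1 i + p.2 (i - 1)} =
      (AddSubmonoid.closure
        (({((fun _ => 1 : Fin (k + 1) → ℕ), (fun _ => 0 : Fin (k + 1) → ℕ)),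
            ((fun _ => 0 : Fin (k + 1) → ℕ), (fun _ => 1 : Fin (k + 1) → ℕ))} :
              Set ((Fin (k + 1) → ℕ) × (Fin (k + 1) → ℕ))) ∪
          Set.range (fun i : Fin (k + 1) =>
            ((fun j => if j = i then 1 else 0 : Fin (k + 1) → ℕ),
             (fun j => if j = i then 1 else 0 : Fin (k + 1) → ℕ)))) :
        AddSubmonoid ((Fin (k + 1) → ℕ) × (Fin (k + 1) → ℕ))) := by
  have single_eq_ite (i : Fin (k + 1)) :
      (fun j => if j = i then 1 else 0) = (Pi.single i 1 : Fin (k + 1) → ℕ) :=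
    funext fun j => (Pi.single_apply i 1 j).symm
  simp only [single_eq_ite, ← Pi.one_def, ← Pi.zero_def]
  rw [closure_eq_constDiffPairs]
  ext p
  exact ⟨Fin.add_eq_add_of_forall_add_sub_one, fun h i => h (i - 1) i⟩

/-- The set `M` of pairs `(α, β) ∈ ℕ^{k+1} × ℕ^{k+1}` with
`α_{i-1} + β_i = α_i + β_{i-1}` for all `i` (indices mod `k+1`) is a submonoid of
`ℕ^{k+1} × ℕ^{k+1}`, and it equals the submonoid generated by the `k+3` elements
`((1,…,1),(0,…,0))`, `((0,…,0),(1,…,1))` and `(e_i, e_i)` for `0 ≤ i ≤ k`. -/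
theorem stmt5 (k : ℕ) (hk : 1 ≤ k) :
    {p : (Fin (k + 1) → ℕ) × (Fin (k + 1) → ℕ) |
        ∀ i, p.1 (i - 1) + p.2 i = p.1 i + p.2 (i - 1)} =
      (AddSubmonoid.closure
        (({((fun _ => 1 : Fin (k + 1) → ℕ), (fun _ => 0 : Fin (k + 1) → ℕ)),
            ((fun _ => 0 : Fin (k + 1) → ℕ), (fun _ => 1 : Fin (k + 1) → ℕ))} :
              Set ((Fin (k + 1) → ℕ) × (Fin (k + 1) → ℕ))) ∪
          Set.range (fun i : Fin (k + 1) =>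
            ((fun j => if j = i then 1 else 0 : Fin (k + 1) → ℕ),
             (fun j => if j = i then 1 else 0 : Fin (k + 1) → ℕ)))) :
        AddSubmonoid ((Fin (k + 1) → ℕ) × (Fin (k + 1) → ℕ))) :=
  stmt5_general k
end

section
/- A vector (u, v, z̃_0, …, z̃_s) ∈ ℤ^{s+3} with all coordinates nonnegative satisfies u + v = Σ_{t=0}^{s} N_t z̃_t if and only if it is an ℕ-linear combination of the vectors w(t,δ) for t ∈ {0,…,s} and δ ∈ {0,…,N_t}. (This is the description of the ray generators of the toric fan of the subvariety X_Γ: the lattice points of the cone on the polytope Π̃ are exactly the ℕ-span of the w(t,δ).) -/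
/-- `N_t = #γ⁻¹(t)`, the size of the `t`-th piece of the partition encoded by `γ`. -/
def Nt (k s : ℕ) (γ : Fin (k + 1) → Fin (s + 1)) (t : Fin (s + 1)) : ℕ :=
  (Finset.univ.filter fun j => γ j = t).card

/-- The vector `w(t,δ) ∈ ℤ^{s+3}` with `u = δ`, `v = N_t − δ`, `z̃_t = 1`, rest `0`.
Elements of `ℤ^{s+3}` are written as `ℤ × ℤ × (Fin (s+1) → ℤ)` with coordinates
`(u, v, z̃)`. -/
def wvec (k s : ℕ) (γ : Fin (k + 1) → Fin (s + 1)) (t : Fin (s + 1)) (δ : ℕ) :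
    ℤ × ℤ × (Fin (s + 1) → ℤ) :=
  ((δ : ℤ), (Nt k s γ t : ℤ) - (δ : ℤ), fun r => if r = t then 1 else 0)

/-!
A combination `∑ c_{t,δ} • w(t,δ)` has `z̃_t = ∑_δ c_{t,δ}`, `u = ∑_t a_t` with
`a_t = ∑_δ δ c_{t,δ}`, and `v = ∑_t N_t z̃_t - u`. For fixed `t` the attainable pairs `(a_t, z̃_t)`
are exactly those with `a_t ≤ N_t z̃_t`: write `a_t` as a sum of `z̃_t` numbers in `[0, N_t]` and
let `c_{t,δ}` count the summands equal to `δ`. Hence the combinations are the nonnegative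
`(u, v, z̃)` with `u + v = ∑ N_t z̃_t` for which `u` splits as `∑ a_t` with `a_t ≤ N_t z̃_t`, and such
a splitting exists exactly when `u ≤ ∑ N_t z̃_t`, i.e. when `v ≥ 0`.
-/

open Finset

lemma Finset.exists_le_and_sum_eq_of_le_sum {ι : Type*} [DecidableEq ι] (s : Finset ι)
    (A : ι → ℕ) {u : ℕ} (hu : u ≤ ∑ i ∈ s, A i) :
    ∃ a : ι → ℕ, (∀ i, a i ≤ A i) ∧ ∑ i ∈ s, a i = u := by
  induction s using Finset.induction_on generalizing u with
  | empty => exact ⟨0, fun _ => Nat.zero_le _, by simpa using (Nat.le_zero.mp hu).symm⟩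
  | @insert i s hi ih =>
    rw [sum_insert hi] at hu
    obtain ⟨a, ha, hsum⟩ := ih (u := u - min u (A i)) (by omega)
    refine ⟨Function.update a i (min u (A i)), fun j => ?_, ?_⟩
    · rcases eq_or_ne j i with rfl | hj
      · simp
      · simpa [hj] using ha j
    · rw [sum_insert hi, Function.update_self, sum_update_of_notMem hi, hsum]
      omega

lemma exists_sum_eq_and_sum_mul_eq_iff (N a z : ℕ) :
    (∃ c : Fin (N + 1) → ℕ, ∑ δ, c δ = z ∧ ∑ δ : Fin (N + 1), (δ : ℕ) * c δ = a) ↔ a ≤ N * z := by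
  constructor
  · rintro ⟨c, rfl, rfl⟩
    rw [mul_sum]
    exact sum_le_sum fun δ _ => Nat.mul_le_mul_right _ (Nat.lt_succ_iff.mp δ.isLt)
  · intro h
    obtain ⟨b, hb, hsum⟩ := exists_le_and_sum_eq_of_le_sum (univ : Finset (Fin z)) (fun _ => N)
      (by simpa [mul_comm] using h)
    let f : Fin z → Fin (N + 1) := fun i => ⟨b i, Nat.lt_succ_of_le (hb i)⟩
    refine ⟨fun δ => #{i | f i = δ}, ?_, ?_⟩
    · rw [← card_eq_sum_card_fiberwise fun i _ => mem_univ (f i), card_univ, Fintype.card_fin]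
    · rw [← hsum, ← sum_fiberwise' univ f (fun δ => (δ : ℕ))]
      simp [mul_comm, f]

lemma sum_sum_smul_wvec {k s : ℕ} {γ : Fin (k + 1) → Fin (s + 1)}
    (c : (t : Fin (s + 1)) → Fin (Nt k s γ t + 1) → ℕ) {a z : Fin (s + 1) → ℕ}
    (hz : ∀ t, ∑ δ, c t δ = z t) (ha : ∀ t, ∑ δ : Fin (Nt k s γ t + 1), (δ : ℕ) * c t δ = a t) :
    ∑ t, ∑ δ, c t δ • wvec k s γ t (δ : ℕ) =
      (∑ t, (a t : ℤ), ∑ t, ((Nt k s γ t : ℤ) * z t - a t), fun t => (z t : ℤ)) := by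
  refine Prod.ext ?_ (Prod.ext ?_ ?_)
  · simp [Prod.fst_sum, wvec, ← ha, mul_comm]
  · simp [Prod.snd_sum, Prod.fst_sum, wvec, ← ha, ← hz, mul_sub, mul_sum, sum_sub_distrib, mul_comm]
  · funext r
    simp [Prod.snd_sum, wvec, ← hz]

theorem stmt6_general (k s : ℕ) (γ : Fin (k + 1) → Fin (s + 1))
    (x : ℤ × ℤ × (Fin (s + 1) → ℤ)) :
    (0 ≤ x.1 ∧ 0 ≤ x.2.1 ∧ (∀ t, 0 ≤ x.2.2 t) ∧
        x.1 + x.2.1 = ∑ t, (Nt k s γ t : ℤ) * x.2.2 t) ↔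
      ∃ c : (t : Fin (s + 1)) → Fin (Nt k s γ t + 1) → ℕ,
        x = ∑ t, ∑ δ, c t δ • wvec k s γ t (δ : ℕ) := by
  constructor
  · obtain ⟨u, v, z⟩ := x
    rintro ⟨hu, hv, hz, hsum⟩
    lift u to ℕ using hu
    lift z to Fin (s + 1) → ℕ using hz
    obtain ⟨a, ha, rfl⟩ := exists_le_and_sum_eq_of_le_sum univ (fun t => Nt k s γ t * z t)
      (u := u) (by zify; simp only at hsum; linarith)
    choose c hcz hca using fun t => (exists_sum_eq_and_sum_mul_eq_iff _ (a t) (z t)).2 (ha t)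
    refine ⟨c, ?_⟩
    rw [sum_sum_smul_wvec c hcz hca, sum_sub_distrib]
    push_cast at hsum ⊢
    simp only [Prod.mk.injEq, true_and, and_true]
    linarith
  · rintro ⟨c, rfl⟩
    have hle t := (exists_sum_eq_and_sum_mul_eq_iff _ _ _).1 ⟨c t, rfl, rfl⟩
    rw [sum_sum_smul_wvec c (fun _ => rfl) (fun _ => rfl)]
    dsimp only
    refine ⟨by positivity, sum_nonneg fun t _ => ?_, fun t => by positivity, ?_⟩
    · exact sub_nonneg.2 (by exact_mod_cast hle t)
    · rw [← sum_add_distrib]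
      simp

/-- A nonnegative vector `(u, v, z̃_0, …, z̃_s)` satisfies `u + v = Σ_t N_t z̃_t` iff it is
an ℕ-linear combination of the vectors `w(t,δ)`, `t ∈ {0,…,s}`, `δ ∈ {0,…,N_t}`. -/
theorem stmt6 (k s : ℕ) (hk : 1 ≤ k) (γ : Fin (k + 1) → Fin (s + 1))
    (hγ : Function.Surjective γ) (x : ℤ × ℤ × (Fin (s + 1) → ℤ)) :
    (0 ≤ x.1 ∧ 0 ≤ x.2.1 ∧ (∀ t, 0 ≤ x.2.2 t) ∧
        x.1 + x.2.1 = ∑ t, (Nt k s γ t : ℤ) * x.2.2 t) ↔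
      ∃ c : (t : Fin (s + 1)) → Fin (Nt k s γ t + 1) → ℕ,
        x = ∑ t, ∑ δ, c t δ • wvec k s γ t (δ : ℕ) :=
  stmt6_general k s γ x
end

section
/- The subgroup of ℤ^{s+3} generated by the vectors w(t,δ), for t ∈ {0,…,s} and δ ∈ {0,…,N_t}, is exactly the hyperplane sublattice {(u, v, z̃_0, …, z̃_s) ∈ ℤ^{s+3} : u + v = Σ_{t=0}^{s} N_t z̃_t}. -/
/-- The subgroup of `ℤ^{s+3}` generated by the vectors `w(t,δ)` for `t ∈ {0,…,s}`,
`δ ∈ {0,…,N_t}`, is exactly the hyperplane sublattice `u + v = Σ_t N_t z̃_t`. -/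
theorem stmt7 (k s : ℕ) (hk : 1 ≤ k) (γ : Fin (k + 1) → Fin (s + 1))
    (hγ : Function.Surjective γ) :
    ((AddSubgroup.closure
        (Set.range fun p : (t : Fin (s + 1)) × Fin (Nt k s γ t + 1) =>
          wvec k s γ p.1 (p.2 : ℕ)) :
          AddSubgroup (ℤ × ℤ × (Fin (s + 1) → ℤ))) :
        Set (ℤ × ℤ × (Fin (s + 1) → ℤ))) =
      {x | x.1 + x.2.1 = ∑ t, (Nt k s γ t : ℤ) * x.2.2 t} := by
  have hN : ∀ t, 1 ≤ Nt k s γ t := by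
    intro t
    obtain ⟨j, hj⟩ := hγ t
    exact Finset.card_pos.mpr ⟨j, by simp [hj]⟩
  -- the hyperplane as a kernel
  let f : (ℤ × ℤ × (Fin (s + 1) → ℤ)) →+ ℤ :=
    { toFun := fun x => x.1 + x.2.1 - ∑ t, (Nt k s γ t : ℤ) * x.2.2 t
      map_zero' := by simp
      map_add' := by
        intro a b
        simp [mul_add, Finset.sum_add_distrib]
        ring }
  have hker : ∀ x : ℤ × ℤ × (Fin (s + 1) → ℤ),
      x ∈ f.ker ↔ x.1 + x.2.1 = ∑ t, (Nt k s γ t : ℤ) * x.2.2 t := by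
    intro x
    simp [f, AddMonoidHom.mem_ker, sub_eq_zero]
  have hle : AddSubgroup.closure
        (Set.range fun p : (t : Fin (s + 1)) × Fin (Nt k s γ t + 1) =>
          wvec k s γ p.1 (p.2 : ℕ)) ≤ f.ker := by
    rw [AddSubgroup.closure_le]
    rintro _ ⟨⟨t, δ⟩, rfl⟩
    rw [SetLike.mem_coe, hker]
    simp [wvec, mul_ite, Finset.sum_ite_eq]
  have hge : ∀ x : ℤ × ℤ × (Fin (s + 1) → ℤ),
      x.1 + x.2.1 = ∑ t, (Nt k s γ t : ℤ) * x.2.2 t →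
      x ∈ AddSubgroup.closure
        (Set.range fun p : (t : Fin (s + 1)) × Fin (Nt k s γ t + 1) =>
          wvec k s γ p.1 (p.2 : ℕ)) := by
    intro x hx
    set C := AddSubgroup.closure
        (Set.range fun p : (t : Fin (s + 1)) × Fin (Nt k s γ t + 1) =>
          wvec k s γ p.1 (p.2 : ℕ)) with hC
    have hw : ∀ (t : Fin (s + 1)) (δ : ℕ), δ ≤ Nt k s γ t → wvec k s γ t δ ∈ C := by
      intro t δ hδ
      exact AddSubgroup.subset_closure ⟨⟨t, ⟨δ, by omega⟩⟩, rfl⟩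
    set t0 : Fin (s + 1) := 0 with ht0
    have he : (wvec k s γ t0 1 - wvec k s γ t0 0) ∈ C :=
      sub_mem (hw t0 1 (hN t0)) (hw t0 0 (Nat.zero_le _))
    have hrepr : x = x.1 • (wvec k s γ t0 1 - wvec k s γ t0 0)
        + ∑ t, x.2.2 t • wvec k s γ t 0 := by
      obtain ⟨u, v, z⟩ := x
      simp only at hx
      refine Prod.ext ?_ (Prod.ext ?_ ?_)
      · simp [wvec, Prod.fst_sum]
      · simp only [wvec, Prod.snd_add, Prod.fst_add, Prod.smul_snd, Prod.smul_fst,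
          Prod.snd_sub, Prod.fst_sub, Prod.snd_sum, Prod.fst_sum, smul_eq_mul,
          Nat.cast_zero, Nat.cast_one, sub_zero]
        have hsum : ∑ t, z t * (Nt k s γ t : ℤ) = ∑ t, (Nt k s γ t : ℤ) * z t := by
          simp [mul_comm]
        rw [hsum, ← hx]; ring
      · funext r
        simp [wvec, Prod.snd_sum, Finset.sum_apply, mul_ite, Finset.sum_ite_eq]
    rw [hrepr]
    exact add_mem (zsmul_mem he _)
      (AddSubgroup.sum_mem _ (fun t _ => zsmul_mem (hw t 0 (Nat.zero_le _)) _))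
  ext x
  simp only [SetLike.mem_coe, Set.mem_setOf_eq]
  exact ⟨fun h => (hker x).mp (hle h), hge x⟩
end

section
/- Suppose (u, v, z̃_0, …, z̃_s) ∈ ℤ^{s+3} has all coordinates nonnegative and satisfies u + v = Σ_{t=0}^{s} N_t z̃_t. Then the set I = { i ∈ {0,…,k} : Σ_{t=0}^{s} n^i_t z̃_t ≤ u and Σ_{t=0}^{s} m^i_t z̃_t ≤ v } is nonempty; moreover I consists of consecutive integers, i.e. if i ≤ j ≤ l and both i ∈ I and l ∈ I, then j ∈ I. (This says the cones on the simplices Δ̃_i cover the cone on the polytope Π̃, so the Δ̃_i triangulate Π̃.) -/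
/-- `n^i_t = #(γ⁻¹(t) ∩ {0,…,i−1})`. -/
def nit (k s : ℕ) (γ : Fin (k + 1) → Fin (s + 1)) (i : Fin (k + 1)) (t : Fin (s + 1)) : ℕ :=
  (Finset.univ.filter fun j => γ j = t ∧ j < i).card

/-- `m^i_t = #(γ⁻¹(t) ∩ {i+1,…,k})`. -/
def mit (k s : ℕ) (γ : Fin (k + 1) → Fin (s + 1)) (i : Fin (k + 1)) (t : Fin (s + 1)) : ℕ :=
  (Finset.univ.filter fun j => γ j = t ∧ i < j).card

lemma card_split (k s : ℕ) (γ : Fin (k+1) → Fin (s+1)) (i : Fin (k+1)) (t : Fin (s+1)) :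
    nit k s γ i t + mit k s γ i t + (if γ i = t then 1 else 0) = Nt k s γ t := by
  classical
  unfold nit mit Nt
  simp only [Finset.card_filter]
  rw [← Finset.sum_add_distrib]
  have h : (if γ i = t then 1 else 0)
      = ∑ j : Fin (k+1), if j = i then (if γ j = t then 1 else 0) else 0 := by
    simp
  rw [h, ← Finset.sum_add_distrib]
  apply Finset.sum_congr rfl
  intro j _
  rcases lt_trichotomy j i with h1 | h1 | h1 <;> split_ifs <;> simp_all <;> omega

lemma nit_succ (k s : ℕ) (γ : Fin (k+1) → Fin (s+1)) (i : Fin (k+1)) (hi : i.val < k)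
    (t : Fin (s+1)) :
    nit k s γ ⟨i.val+1, by omega⟩ t = nit k s γ i t + (if γ i = t then 1 else 0) := by
  classical
  unfold nit
  simp only [Finset.card_filter]
  have h : (if γ i = t then 1 else 0)
      = ∑ j : Fin (k+1), if j = i then (if γ j = t then 1 else 0) else 0 := by
    rw [Finset.sum_ite_eq']; simp
  rw [h, ← Finset.sum_add_distrib]
  apply Finset.sum_congr rfl
  intro j _
  have hji : j < (⟨i.val+1, by omega⟩ : Fin (k+1)) ↔ j < i ∨ j = i := by
    simp only [Fin.lt_def, Fin.ext_iff]
    omega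
  rcases lt_trichotomy j i with h1 | h1 | h1 <;> split_ifs <;> simp_all <;> omega

/-- For a nonnegative vector `(u, v, z̃)` on the hyperplane `u + v = Σ_t N_t z̃_t`, the set
`I = { i : Σ_t n^i_t z̃_t ≤ u and Σ_t m^i_t z̃_t ≤ v }` is nonempty and consists of
consecutive integers. -/
theorem stmt8 (k s : ℕ) (hk : 1 ≤ k) (γ : Fin (k + 1) → Fin (s + 1))
    (hγ : Function.Surjective γ) (x : ℤ × ℤ × (Fin (s + 1) → ℤ))
    (hu : 0 ≤ x.1) (hv : 0 ≤ x.2.1) (hz : ∀ t, 0 ≤ x.2.2 t)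
    (heq : x.1 + x.2.1 = ∑ t, (Nt k s γ t : ℤ) * x.2.2 t) :
    (∃ i : Fin (k + 1),
        (∑ t, (nit k s γ i t : ℤ) * x.2.2 t) ≤ x.1 ∧
        (∑ t, (mit k s γ i t : ℤ) * x.2.2 t) ≤ x.2.1) ∧
      ∀ i j l : Fin (k + 1), i ≤ j → j ≤ l →
        ((∑ t, (nit k s γ i t : ℤ) * x.2.2 t) ≤ x.1 ∧
          (∑ t, (mit k s γ i t : ℤ) * x.2.2 t) ≤ x.2.1) →
        ((∑ t, (nit k s γ l t : ℤ) * x.2.2 t) ≤ x.1 ∧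
          (∑ t, (mit k s γ l t : ℤ) * x.2.2 t) ≤ x.2.1) →
        ((∑ t, (nit k s γ j t : ℤ) * x.2.2 t) ≤ x.1 ∧
          (∑ t, (mit k s γ j t : ℤ) * x.2.2 t) ≤ x.2.1) := by
  classical
  obtain ⟨u, v, z⟩ := x
  simp only at hu hv hz heq ⊢
  set f : Fin (k+1) → ℤ := fun i => ∑ t, (nit k s γ i t : ℤ) * z t with hf
  set g : Fin (k+1) → ℤ := fun i => ∑ t, (mit k s γ i t : ℤ) * z t with hg
  -- monotonicity of f
  have fmono : ∀ i j : Fin (k+1), i ≤ j → f i ≤ f j := by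
    intro i j hij
    apply Finset.sum_le_sum
    intro t _
    apply mul_le_mul_of_nonneg_right _ (hz t)
    exact_mod_cast Finset.card_le_card (by
      intro a ha
      simp only [Finset.mem_filter, Finset.mem_univ, true_and] at ha ⊢
      exact ⟨ha.1, lt_of_lt_of_le ha.2 hij⟩)
  have gmono : ∀ i j : Fin (k+1), i ≤ j → g j ≤ g i := by
    intro i j hij
    apply Finset.sum_le_sum
    intro t _
    apply mul_le_mul_of_nonneg_right _ (hz t)
    exact_mod_cast Finset.card_le_card (by
      intro a ha
      simp only [Finset.mem_filter, Finset.mem_univ, true_and] at ha ⊢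
      exact ⟨ha.1, lt_of_le_of_lt hij ha.2⟩)
  -- the key identity  f i + g i + z (γ i) = u + v
  have hsum : ∀ i : Fin (k+1), f i + g i + z (γ i) = u + v := by
    intro i
    have h1 : ∀ t, ((nit k s γ i t : ℤ) + (mit k s γ i t : ℤ)
        + (if γ i = t then 1 else 0)) * z t = (Nt k s γ t : ℤ) * z t := by
      intro t
      congr 1
      have := card_split k s γ i t
      split_ifs with h <;> push_cast [← this, h] <;> simp [h] <;> ring_nf <;> simp_all
    have h2 : ∑ t, ((nit k s γ i t : ℤ) + (mit k s γ i t : ℤ)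
        + (if γ i = t then 1 else 0)) * z t = u + v := by
      rw [Finset.sum_congr rfl (fun t _ => h1 t)]; exact heq.symm
    have h3 : ∑ t, (if γ i = t then (1:ℤ) else 0) * z t = z (γ i) := by
      simp [ite_mul]
    calc f i + g i + z (γ i)
        = ∑ t, ((nit k s γ i t : ℤ) + (mit k s γ i t : ℤ)
            + (if γ i = t then 1 else 0)) * z t := by
          simp only [hf, hg, ← h3, ← Finset.sum_add_distrib, add_mul]
      _ = u + v := h2
  have hf0 : f 0 = 0 := by
    apply Finset.sum_eq_zero
    intro t _
    have : nit k s γ 0 t = 0 := by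
      apply Finset.card_eq_zero.mpr
      apply Finset.filter_eq_empty_iff.mpr
      intro j _
      simp [Fin.lt_def]
    simp [this]
  constructor
  · -- nonemptiness
    set S : Finset (Fin (k+1)) := Finset.univ.filter (fun i => f i ≤ u) with hS
    have h0S : (0 : Fin (k+1)) ∈ S := by simp [hS, hf0, hu]
    have hne : S.Nonempty := ⟨0, h0S⟩
    set i := S.max' hne with hi
    have hiS : i ∈ S := S.max'_mem hne
    have hfi : f i ≤ u := by simpa [hS] using hiS
    refine ⟨i, hfi, ?_⟩
    by_cases hik : i.val < k
    · set i' : Fin (k+1) := ⟨i.val + 1, by omega⟩ with hi'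
      have hfi' : f i' = f i + z (γ i) := by
        have : ∀ t, (nit k s γ i' t : ℤ) * z t
            = (nit k s γ i t : ℤ) * z t + (if γ i = t then (1:ℤ) else 0) * z t := by
          intro t
          rw [← add_mul]
          congr 1
          rw [nit_succ k s γ i hik t]
          push_cast
          split_ifs <;> simp
        have h3 : ∑ t, (if γ i = t then (1:ℤ) else 0) * z t = z (γ i) := by
          simp [ite_mul]
        simp only [hf]
        rw [Finset.sum_congr rfl (fun t _ => this t), Finset.sum_add_distrib, h3]
      have hnot : ¬ (f i' ≤ u) := by
        intro hle
        have : i' ∈ S := by simp [hS, hle]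
        have hle2 := S.le_max' i' this
        rw [← hi] at hle2
        have : i < i' := by simp [hi', Fin.lt_def]
        exact absurd (lt_of_lt_of_le this hle2) (lt_irrefl _)
      have := hsum i
      have : u < f i + z (γ i) := by rw [← hfi'] ; omega
      linarith [hsum i]
    · -- i = last
      have : ∀ t, mit k s γ i t = 0 := by
        intro t
        apply Finset.card_eq_zero.mpr
        apply Finset.filter_eq_empty_iff.mpr
        intro j _
        simp only [not_and]
        intro _
        rw [Fin.lt_def]
        omega
      have : g i = 0 := by
        apply Finset.sum_eq_zero
        intro t _
        simp [this t]
      rw [hg] at this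
      simp only [this]
      omega
  · intro i j l hij hjl ⟨hfi, hgi⟩ ⟨hfl, hgl⟩
    exact ⟨le_trans (fmono j l hjl) hfl, le_trans (gmono i j hij) hgi⟩
end

section
/- For each i ∈ {0,…,k}, the s+2 vectors w(0, n^i_0), w(1, n^i_1), …, w(s, n^i_s) together with w(γ(i), n^i_{γ(i)} + 1) form a ℤ-basis of the subgroup {(u, v, z̃_0, …, z̃_s) ∈ ℤ^{s+3} : u + v = Σ_{t=0}^{s} N_t z̃_t}. (Note n^i_{γ(i)} + 1 ≤ N_{γ(i)}, so all these vectors are defined; this expresses the smoothness of the toric charts of the standard phase X_Γ.) -/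
/-- The `s+2` vectors `w(t, n^i_t)` for `t ∈ {0,…,s}` (indexed by `some t`) together with
`w(γ(i), n^i_{γ(i)} + 1)` (indexed by `none`). -/
def vvec (k s : ℕ) (γ : Fin (k + 1) → Fin (s + 1)) (i : Fin (k + 1)) :
    Option (Fin (s + 1)) → ℤ × ℤ × (Fin (s + 1) → ℤ)
  | some t => wvec k s γ t (nit k s γ i t)
  | none => wvec k s γ (γ i) (nit k s γ i (γ i) + 1)

/-- For each `i`, the `s+2` vectors `w(0, n^i_0), …, w(s, n^i_s), w(γ(i), n^i_{γ(i)}+1)`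
form a ℤ-basis of the hyperplane sublattice `u + v = Σ_t N_t z̃_t`. -/
theorem stmt9 (k s : ℕ) (hk : 1 ≤ k) (γ : Fin (k + 1) → Fin (s + 1))
    (hγ : Function.Surjective γ) (i : Fin (k + 1)) :
    LinearIndependent ℤ (vvec k s γ i) ∧
      ((Submodule.span ℤ (Set.range (vvec k s γ i)) :
          Submodule ℤ (ℤ × ℤ × (Fin (s + 1) → ℤ))) :
          Set (ℤ × ℤ × (Fin (s + 1) → ℤ))) =
        {x | x.1 + x.2.1 = ∑ t, (Nt k s γ t : ℤ) * x.2.2 t} := by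
  classical
  constructor
  · rw [Fintype.linearIndependent_iff]
    intro c hc
    have h3 : ∀ r : Fin (s+1),
        c none * (if r = γ i then (1:ℤ) else 0) + c (some r) = 0 := by
      intro r
      have h := congrArg (fun x => x.2.2 r) hc
      simpa [Fintype.sum_option, vvec, wvec, Prod.snd_sum, Finset.sum_apply, Prod.smul_snd,
        Pi.smul_apply, smul_eq_mul, mul_ite, Finset.sum_ite_eq] using h
    have hz : ∀ t : Fin (s+1), t ≠ γ i → c (some t) = 0 := by
      intro t ht
      have := h3 t
      simpa [ht] using this
    have hg : c none + c (some (γ i)) = 0 := by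
      have := h3 (γ i)
      simpa using this
    have h1 := congrArg Prod.fst hc
    simp only [Prod.fst_sum, Fintype.sum_option, Prod.fst_add, Prod.smul_fst, smul_eq_mul, vvec,
      wvec, Prod.fst_zero] at h1
    have hsum : ∑ t : Fin (s+1), c (some t) * (nit k s γ i t : ℤ)
        = c (some (γ i)) * (nit k s γ i (γ i) : ℤ) := by
      apply Finset.sum_eq_single
      · intro t _ ht
        simp [hz t ht]
      · simp
    rw [hsum] at h1
    have hn0 : c none = 0 := by
      have hg' : c (some (γ i)) = -c none := by linarith
      rw [hg'] at h1
      push_cast at h1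
      nlinarith [h1]
    intro o
    cases o with
    | none => exact hn0
    | some t =>
      by_cases ht : t = γ i
      · subst ht; linarith
      · exact hz t ht
  · have hker : ∀ o, (vvec k s γ i o).1 + (vvec k s γ i o).2.1
        = ∑ t, (Nt k s γ t : ℤ) * (vvec k s γ i o).2.2 t := by
      intro o
      cases o <;> simp [vvec, wvec, mul_ite, Finset.sum_ite_eq]
    apply le_antisymm
    · intro x hx
      refine Submodule.span_induction ?_ ?_ ?_ ?_ hx
      · rintro y ⟨o, rfl⟩
        exact hker o
      · simp
      · intro a b _ _ ha hb
        simp only [Set.mem_setOf_eq] at *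
        simp only [Prod.fst_add, Prod.snd_add, Pi.add_apply, mul_add, Finset.sum_add_distrib]
        linarith [ha, hb]
      · intro a x _ hx
        simp only [Set.mem_setOf_eq] at *
        simp only [Prod.smul_fst, Prod.smul_snd, Pi.smul_apply, smul_eq_mul]
        rw [show ∀ f : Fin (s+1) → ℤ, (∑ t, (Nt k s γ t : ℤ) * (a * f t)) = a * ∑ t, (Nt k s γ t : ℤ) * f t from fun f => by rw [Finset.mul_sum]; exact Finset.sum_congr rfl fun t _ => by ring]
        rw [← hx]; ring
    · intro x hx
      simp only [Set.mem_setOf_eq] at hx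
      set a : ℤ := x.1 - ∑ t, x.2.2 t * (nit k s γ i t : ℤ) with ha
      have hxeq : x = (∑ t, x.2.2 t • vvec k s γ i (some t))
          + a • vvec k s γ i none - a • vvec k s γ i (some (γ i)) := by
        refine Prod.ext ?_ (Prod.ext ?_ ?_)
        · simp only [Prod.fst_sub, Prod.fst_add, Prod.fst_sum, Prod.smul_fst, smul_eq_mul,
            vvec, wvec]
          push_cast
          ring
        · simp only [Prod.snd_sub, Prod.snd_add, Prod.snd_sum, Prod.smul_snd, Prod.fst_sub,
            Prod.fst_add, Prod.fst_sum, Prod.smul_fst, smul_eq_mul, vvec, wvec]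
          have hx' : ∑ t, x.2.2 t * (Nt k s γ t : ℤ) = x.1 + x.2.1 := by
            rw [hx]; exact Finset.sum_congr rfl fun t _ => mul_comm _ _
          simp only [mul_sub, Finset.sum_sub_distrib]
          push_cast
          rw [ha]
          linarith [hx']
        · funext r
          simp only [Prod.snd_sub, Prod.snd_add, Pi.sub_apply, Pi.add_apply, Finset.sum_apply,
            Pi.smul_apply, smul_eq_mul, Prod.snd_sum, vvec, wvec, mul_ite, mul_one, mul_zero,
            Finset.sum_ite_eq]
          simp only [Prod.smul_mk, smul_eq_mul, Pi.smul_apply, mul_ite, mul_one, mul_zero,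
            Finset.sum_ite_eq, Finset.mem_univ, if_true]
          ring
      rw [hxeq]
      exact sub_mem (add_mem (Submodule.sum_mem _ fun t _ =>
          Submodule.smul_mem _ _ (Submodule.subset_span ⟨some t, rfl⟩))
          (Submodule.smul_mem _ _ (Submodule.subset_span ⟨none, rfl⟩)))
        (Submodule.smul_mem _ _ (Submodule.subset_span ⟨some (γ i), rfl⟩))
end

section
/- Fix i ∈ {0,…,k}. A vector (u, v, z̃_0, …, z̃_s) ∈ ℤ^{s+3} has all coordinates nonnegative and satisfies u + v = Σ_{t=0}^{s} N_t z̃_t, Σ_{t=0}^{s} n^i_t z̃_t ≤ u and Σ_{t=0}^{s} m^i_t z̃_t ≤ v, if and only if it is an ℕ-linear combination of the s+2 vectors w(0, n^i_0), w(1, n^i_1), …, w(s, n^i_s) and w(γ(i), n^i_{γ(i)} + 1). (This identifies the lattice points of the cone on the simplex Δ̃_i of the triangulation.) -/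
/-! Since `N_t = n^i_t + m^i_t + [t = γ(i)]`, in the coordinates `a = u - Σ n^i_t z̃_t`,
`b = v - Σ m^i_t z̃_t` the cone becomes `{a, b, z̃ ≥ 0, a + b = z̃_{γ(i)}}`, and the generators
become `(a, b, z̃) = (0, [t = γ(i)], e_t)` and `(1, 0, e_{γ(i)})`. So a point of the cone is
`a • w(γ(i), n^i_{γ(i)} + 1) + Σ_t (z̃_t - a [t = γ(i)]) • w(t, n^i_t)`
with nonnegative coefficients; conversely the cone is an additive submonoid containing the
generators. -/

open Finset

lemma AddSubmonoid.sum_zsmul_mem_closure_range {G ι : Type*} [AddCommGroup G] [Fintype ι]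
    (f : ι → G) {d : ι → ℤ} (hd : ∀ o, 0 ≤ d o) :
    ∑ o, d o • f o ∈ AddSubmonoid.closure (Set.range f) := by
  refine AddSubmonoid.sum_mem _ fun o _ => ?_
  rw [← Int.toNat_of_nonneg (hd o), natCast_zsmul]
  exact nsmul_mem (AddSubmonoid.subset_closure (Set.mem_range_self o)) _

section

variable {k s : ℕ} (γ : Fin (k + 1) → Fin (s + 1)) (i : Fin (k + 1))

lemma Nt_eq_nit_add_mit (t : Fin (s + 1)) :
    Nt k s γ t = nit k s γ i t + mit k s γ i t + if t = γ i then 1 else 0 := by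
  have h_single : (if t = γ i then 1 else 0) = ∑ j, if j = i ∧ γ j = t then 1 else 0 := by
    simp [ite_and, eq_comm]
  rw [Nt, nit, mit, card_filter, card_filter, card_filter, h_single, ← sum_add_distrib,
    ← sum_add_distrib]
  refine sum_congr rfl fun j _ => ?_
  rcases lt_trichotomy j i with h | rfl | h <;> split_ifs <;> simp_all [lt_asymm, ne_of_gt]

lemma sum_Nt_mul (z : Fin (s + 1) → ℤ) :
    ∑ t, (Nt k s γ t : ℤ) * z t =
      ∑ t, (nit k s γ i t : ℤ) * z t + ∑ t, (mit k s γ i t : ℤ) * z t + z (γ i) := by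
  simp only [Nt_eq_nit_add_mit γ i, Nat.cast_add, Nat.cast_ite, Nat.cast_one, Nat.cast_zero,
    add_mul, sum_add_distrib, ite_mul, one_mul, zero_mul, sum_ite_eq', mem_univ, if_true]

def simplexCone : AddSubmonoid (ℤ × ℤ × (Fin (s + 1) → ℤ)) where
  carrier := {x | 0 ≤ x.1 ∧ 0 ≤ x.2.1 ∧ (∀ t, 0 ≤ x.2.2 t) ∧
    x.1 + x.2.1 = ∑ t, (Nt k s γ t : ℤ) * x.2.2 t ∧
    (∑ t, (nit k s γ i t : ℤ) * x.2.2 t) ≤ x.1 ∧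
    (∑ t, (mit k s γ i t : ℤ) * x.2.2 t) ≤ x.2.1}
  zero_mem' := by simp
  add_mem' := by
    rintro ⟨u, v, z⟩ ⟨u', v', z'⟩ ⟨hu, hv, hz, hN, hn, hm⟩ ⟨hu', hv', hz', hN', hn', hm'⟩
    simp only [Set.mem_ofPred_eq, Prod.mk_add_mk, Pi.add_apply, mul_add, sum_add_distrib] at *
    refine ⟨by linarith, by linarith, fun t => add_nonneg (hz t) (hz' t), by linarith,
      by linarith, by linarith⟩

lemma mem_simplexCone {x : ℤ × ℤ × (Fin (s + 1) → ℤ)} :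
    x ∈ simplexCone γ i ↔ 0 ≤ x.1 ∧ 0 ≤ x.2.1 ∧ (∀ t, 0 ≤ x.2.2 t) ∧
      x.1 + x.2.1 = ∑ t, (Nt k s γ t : ℤ) * x.2.2 t ∧
      (∑ t, (nit k s γ i t : ℤ) * x.2.2 t) ≤ x.1 ∧
      (∑ t, (mit k s γ i t : ℤ) * x.2.2 t) ≤ x.2.1 :=
  Iff.rfl

lemma wvec_mem_simplexCone {t : Fin (s + 1)} {δ : ℕ} (h₁ : nit k s γ i t ≤ δ)
    (h₂ : δ + mit k s γ i t ≤ Nt k s γ t) : wvec k s γ t δ ∈ simplexCone γ i := by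
  simp only [mem_simplexCone, wvec, mul_ite, mul_one, mul_zero, sum_ite_eq', mem_univ, if_true]
  refine ⟨by positivity, by omega, fun r => by positivity, by ring, by omega, by omega⟩

lemma vvec_mem_simplexCone (o : Option (Fin (s + 1))) : vvec k s γ i o ∈ simplexCone γ i := by
  cases o with
  | none =>
    exact wvec_mem_simplexCone γ i (Nat.le_succ _)
      (by rw [Nt_eq_nit_add_mit γ i, if_pos rfl]; omega)
  | some t => exact wvec_mem_simplexCone γ i le_rfl (by rw [Nt_eq_nit_add_mit γ i]; omega)

lemma sum_zsmul_vvec_some (z : Fin (s + 1) → ℤ) :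
    ∑ t, z t • vvec k s γ i (some t) =
      (∑ t, (nit k s γ i t : ℤ) * z t, ∑ t, ((Nt k s γ t : ℤ) - nit k s γ i t) * z t, z) := by
  ext
  · simp [Prod.fst_sum, vvec, wvec, mul_comm]
  · simp [Prod.snd_sum, Prod.fst_sum, vvec, wvec, mul_comm]
  · simp [Prod.snd_sum, Finset.sum_apply, vvec, wvec]

lemma vvec_none_eq : vvec k s γ i none = vvec k s γ i (some (γ i)) + (1, -1, 0) := by
  simp only [vvec, wvec, Prod.mk_add_mk, Nat.cast_add, Nat.cast_one, add_zero]
  ring_nf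

lemma simplexCone_le_closure :
    simplexCone γ i ≤ AddSubmonoid.closure (Set.range (vvec k s γ i)) := by
  rintro ⟨u, v, z⟩ ⟨-, -, hz, hN, hn, hm⟩
  set a := u - ∑ t, (nit k s γ i t : ℤ) * z t
  have hsplit := sum_Nt_mul γ i z
  have hdecomp : (u, v, z) = ∑ o, (Option.elim o a fun t => z t - if t = γ i then a else 0) •
      vvec k s γ i o := by
    simp only [Fintype.sum_option, Option.elim, sub_smul, sum_sub_distrib, ite_smul, zero_smul,
      sum_ite_eq', mem_univ, if_true, sum_zsmul_vvec_some, vvec_none_eq, smul_add]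
    rw [add_comm (a • vvec k s γ i (some (γ i))), add_add_sub_cancel]
    ext <;> simp [sub_mul, sum_sub_distrib] <;> linarith
  rw [hdecomp]
  refine AddSubmonoid.sum_zsmul_mem_closure_range _ fun o => ?_
  rcases o with _ | t
  · simp only [Option.elim]; linarith
  · simp only [Option.elim]
    split_ifs with ht
    · subst ht; linarith
    · simpa using hz t

lemma simplexCone_eq_closure :
    simplexCone γ i = AddSubmonoid.closure (Set.range (vvec k s γ i)) :=
  le_antisymm (simplexCone_le_closure γ i)
    (AddSubmonoid.closure_le.2 (Set.range_subset_iff.2 (vvec_mem_simplexCone γ i)))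

end

theorem stmt10_general (k s : ℕ) (γ : Fin (k + 1) → Fin (s + 1))
    (i : Fin (k + 1)) (x : ℤ × ℤ × (Fin (s + 1) → ℤ)) :
    (0 ≤ x.1 ∧ 0 ≤ x.2.1 ∧ (∀ t, 0 ≤ x.2.2 t) ∧
        x.1 + x.2.1 = ∑ t, (Nt k s γ t : ℤ) * x.2.2 t ∧
        (∑ t, (nit k s γ i t : ℤ) * x.2.2 t) ≤ x.1 ∧
        (∑ t, (mit k s γ i t : ℤ) * x.2.2 t) ≤ x.2.1) ↔
      ∃ c : Option (Fin (s + 1)) → ℕ, x = ∑ o, c o • vvec k s γ i o := by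
  rw [← mem_simplexCone, simplexCone_eq_closure, AddSubmonoid.mem_closure_range_iff_of_fintype]

/-- A vector `(u, v, z̃)` is nonnegative with `u + v = Σ_t N_t z̃_t`,
`Σ_t n^i_t z̃_t ≤ u` and `Σ_t m^i_t z̃_t ≤ v`, iff it is an ℕ-linear combination of the
`s+2` vectors `w(0, n^i_0), …, w(s, n^i_s), w(γ(i), n^i_{γ(i)}+1)`. -/
theorem stmt10 (k s : ℕ) (hk : 1 ≤ k) (γ : Fin (k + 1) → Fin (s + 1))
    (hγ : Function.Surjective γ) (i : Fin (k + 1)) (x : ℤ × ℤ × (Fin (s + 1) → ℤ)) :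
    (0 ≤ x.1 ∧ 0 ≤ x.2.1 ∧ (∀ t, 0 ≤ x.2.2 t) ∧
        x.1 + x.2.1 = ∑ t, (Nt k s γ t : ℤ) * x.2.2 t ∧
        (∑ t, (nit k s γ i t : ℤ) * x.2.2 t) ≤ x.1 ∧
        (∑ t, (mit k s γ i t : ℤ) * x.2.2 t) ≤ x.2.1) ↔
      ∃ c : Option (Fin (s + 1)) → ℕ, x = ∑ o, c o • vvec k s γ i o :=
  stmt10_general k s γ i x
end

section
/- The vectors τ_1, …, τ_k all lie in the kernel of P̃, and they form a ℤ-basis of the kernel of P̃: they are ℤ-linearly independent, and every element of ker P̃ is a ℤ-linear combination of τ_1, …, τ_k. (This is the identification of the torus (ℂ*)^k acting on the vector space ℂ^{k+s+2} that realizes X_Γ as a GIT quotient.) -/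
/-- The map `P̃ : ℤ^E → ℤ^{s+3}` sending the standard basis vector `e_{(t,δ)}` to
`w(t,δ)`, where `E = {(t,δ) : t ∈ {0,…,s}, 0 ≤ δ ≤ N_t}`. -/
def Ptilde (k s : ℕ) (γ : Fin (k + 1) → Fin (s + 1))
    (y : ((t : Fin (s + 1)) × Fin (Nt k s γ t + 1)) → ℤ) :
    ℤ × ℤ × (Fin (s + 1) → ℤ) :=
  ∑ e : (t : Fin (s + 1)) × Fin (Nt k s γ t + 1), y e • wvec k s γ e.1 (e.2 : ℕ)

/-- The standard basis vector `e_{(t,δ)} ∈ ℤ^E` (zero if `δ > N_t`). -/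
def bvec (k s : ℕ) (γ : Fin (k + 1) → Fin (s + 1)) (t : Fin (s + 1)) (δ : ℕ) :
    ((t' : Fin (s + 1)) × Fin (Nt k s γ t' + 1)) → ℤ :=
  fun e => if e.1 = t ∧ (e.2 : ℕ) = δ then 1 else 0

/-- For `i ∈ {1,…,k}` (represented by `i : Fin k`, with paper indices `i−1 = i.castSucc`
and `i = i.succ`), the vector
`τ_i = e_{(γ(i−1), n^{i−1}_{γ(i−1)}+1)} − e_{(γ(i−1), n^{i−1}_{γ(i−1)})}
      − e_{(γ(i), n^{i}_{γ(i)}+1)} + e_{(γ(i), n^{i}_{γ(i)})} ∈ ℤ^E`. -/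
def tauvec (k s : ℕ) (γ : Fin (k + 1) → Fin (s + 1)) (i : Fin k) :
    ((t : Fin (s + 1)) × Fin (Nt k s γ t + 1)) → ℤ :=
  bvec k s γ (γ i.castSucc) (nit k s γ i.castSucc (γ i.castSucc) + 1)
    - bvec k s γ (γ i.castSucc) (nit k s γ i.castSucc (γ i.castSucc))
    - bvec k s γ (γ i.succ) (nit k s γ i.succ (γ i.succ) + 1)
    + bvec k s γ (γ i.succ) (nit k s γ i.succ (γ i.succ))

namespace StmtAux
open Finset

variable (k s : ℕ) (γ : Fin (k + 1) → Fin (s + 1))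

abbrev E := (t : Fin (s + 1)) × Fin (Nt k s γ t + 1)

/-- The difference vector `D j = e_{(γ j, n^j+1)} - e_{(γ j, n^j)}`. -/
def D (j : Fin (k + 1)) : E k s γ → ℤ :=
  bvec k s γ (γ j) (nit k s γ j (γ j) + 1) - bvec k s γ (γ j) (nit k s γ j (γ j))

lemma tauvec_eq (i : Fin k) :
    tauvec k s γ i = D k s γ i.castSucc - D k s γ i.succ := by
  unfold tauvec D; abel

lemma nit_lt_Nt (j : Fin (k + 1)) : nit k s γ j (γ j) < Nt k s γ (γ j) := by
  apply Finset.card_lt_card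
  constructor
  · intro l hl
    simp only [mem_filter, mem_univ, true_and] at hl ⊢
    exact hl.1
  · intro hsub
    have := hsub (by simp : j ∈ Finset.univ.filter fun l => γ l = γ j)
    simp at this

lemma nit_lt_nit {j j' : Fin (k + 1)} (h : j < j') (t : Fin (s + 1)) (hj : γ j = t) :
    nit k s γ j t < nit k s γ j' t := by
  apply Finset.card_lt_card
  constructor
  · intro l hl
    simp only [mem_filter, mem_univ, true_and] at hl ⊢
    exact ⟨hl.1, lt_trans hl.2 h⟩
  · intro hsub
    have := hsub (by simp [hj, h] : j ∈ Finset.univ.filter fun l => γ l = t ∧ l < j')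
    simp at this

lemma phi_inj {j j' : Fin (k + 1)} (ht : γ j = γ j')
    (hn : nit k s γ j (γ j) = nit k s γ j' (γ j')) : j = j' := by
  rw [← ht] at hn
  rcases lt_trichotomy j j' with h | h | h
  · have h1 := nit_lt_nit k s γ h (γ j) rfl
    omega
  · exact h
  · have h1 := nit_lt_nit k s γ h (γ j) ht.symm
    omega


lemma phi_surj (t : Fin (s + 1)) (d : ℕ) (hd : d < Nt k s γ t) :
    ∃ j, γ j = t ∧ nit k s γ j t = d := by
  classical
  have hcard : Fintype.card {j // γ j = t} = Nt k s γ t := Fintype.card_subtype _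
  let f : {j // γ j = t} → Fin (Nt k s γ t) := fun j => ⟨nit k s γ j.1 t, by
    have := nit_lt_Nt k s γ j.1; rw [j.2] at this; exact this⟩
  have hinj : Function.Injective f := by
    rintro ⟨j, hj⟩ ⟨j', hj'⟩ h
    have h2 : nit k s γ j t = nit k s γ j' t := congrArg Fin.val h
    exact Subtype.ext (phi_inj k s γ (hj.trans hj'.symm) (by rw [hj, hj']; exact h2))
  have hbij : Function.Bijective f :=
    (Fintype.bijective_iff_injective_and_card f).2 ⟨hinj, by rw [hcard, Fintype.card_fin]⟩
  obtain ⟨⟨j, hj⟩, hfj⟩ := hbij.2 ⟨d, hd⟩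
  exact ⟨j, hj, congrArg Fin.val hfj⟩

lemma Ptilde_bvec (t : Fin (s + 1)) (δ : ℕ) (h : δ ≤ Nt k s γ t) :
    Ptilde k s γ (bvec k s γ t δ) = wvec k s γ t δ := by
  have hlt : δ < Nt k s γ t + 1 := by omega
  rw [Ptilde, Finset.sum_eq_single (⟨t, ⟨δ, hlt⟩⟩ : E k s γ)]
  · simp [bvec]
  · rintro ⟨t', d'⟩ _ hne
    rw [show bvec k s γ t δ ⟨t', d'⟩ = if t' = t ∧ (d' : ℕ) = δ then 1 else 0 from rfl]
    rw [if_neg, zero_smul]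
    rintro ⟨rfl, h2⟩
    exact hne (congrArg (Sigma.mk t') (Fin.ext h2))
  · simp

lemma Ptilde_tau (i : Fin k) : Ptilde k s γ (tauvec k s γ i) = 0 := by
  have h1 : nit k s γ i.castSucc (γ i.castSucc) + 1 ≤ Nt k s γ (γ i.castSucc) :=
    nit_lt_Nt k s γ _
  have h2 : nit k s γ i.succ (γ i.succ) + 1 ≤ Nt k s γ (γ i.succ) := nit_lt_Nt k s γ _
  have hadd : ∀ (a b c d : E k s γ → ℤ), Ptilde k s γ (a - b - c + d) =
      Ptilde k s γ a - Ptilde k s γ b - Ptilde k s γ c + Ptilde k s γ d := by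
    intro a b c d
    simp only [Ptilde, Pi.add_apply, Pi.sub_apply, add_smul, sub_smul,
      Finset.sum_add_distrib, Finset.sum_sub_distrib]
  rw [tauvec, hadd, Ptilde_bvec k s γ _ _ h1,
      Ptilde_bvec k s γ _ _ (le_of_lt (nit_lt_Nt k s γ _)),
      Ptilde_bvec k s γ _ _ h2, Ptilde_bvec k s γ _ _ (le_of_lt (nit_lt_Nt k s γ _))]
  have hw : ∀ (t : Fin (s + 1)) (n : ℕ),
      wvec k s γ t (n + 1) - wvec k s γ t n = ((1 : ℤ), (-1 : ℤ), (0 : Fin (s+1) → ℤ)) := by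
    intro t n
    rw [wvec, wvec, Prod.mk_sub_mk, Prod.mk_sub_mk]
    refine Prod.ext ?_ (Prod.ext ?_ ?_)
    · push_cast; ring
    · push_cast; ring
    · funext r; simp
  have key : ∀ (a b c d : ℤ × ℤ × (Fin (s+1) → ℤ)), a - b = c - d → a - b - c + d = 0 := by
    intro a b c d h
    have : a - b - (c - d) = 0 := by rw [h]; abel
    calc a - b - c + d = a - b - (c - d) := by abel
    _ = 0 := this
  exact key _ _ _ _ ((hw _ _).trans (hw _ _).symm)



/-- The functional `x ↦ ∑_{δ ≤ n^j} x (γ j, δ)`. -/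
def Lmap (j : Fin (k + 1)) : (E k s γ → ℤ) →ₗ[ℤ] ℤ where
  toFun x := ∑ d : Fin (Nt k s γ (γ j) + 1),
    if (d : ℕ) ≤ nit k s γ j (γ j) then x ⟨γ j, d⟩ else 0
  map_add' x y := by
    rw [← Finset.sum_add_distrib]
    apply Finset.sum_congr rfl
    intro d _
    by_cases h : (d : ℕ) ≤ nit k s γ j (γ j) <;> simp [h]
  map_smul' m x := by
    simp only [smul_eq_mul, RingHom.id_apply]
    rw [Finset.mul_sum]
    apply Finset.sum_congr rfl
    intro d _
    by_cases h : (d : ℕ) ≤ nit k s γ j (γ j) <;> simp [h]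

lemma sum_ite_eq_nat (t : Fin (s + 1)) (P : ℕ → Prop) [DecidablePred P] (m : ℕ) :
    (∑ d : Fin (Nt k s γ t + 1), if P (d : ℕ) ∧ (d : ℕ) = m then (1 : ℤ) else 0)
      = if P m ∧ m ≤ Nt k s γ t then 1 else 0 := by
  by_cases hm : m ≤ Nt k s γ t
  · have hlt : m < Nt k s γ t + 1 := by omega
    rw [Finset.sum_eq_single (⟨m, hlt⟩ : Fin (Nt k s γ t + 1))]
    · by_cases hP : P m <;> simp [hP, hm]
    · intro d _ hne
      rw [if_neg]
      rintro ⟨-, h2⟩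
      exact hne (Fin.ext h2)
    · simp
  · rw [if_neg (by tauto)]
    apply Finset.sum_eq_zero
    intro d _
    have hd := d.isLt
    rw [if_neg]
    rintro ⟨-, h2⟩
    omega

lemma Lmap_D (j j' : Fin (k + 1)) :
    Lmap k s γ j (D k s γ j') = if j' = j then (-1 : ℤ) else 0 := by
  have hexp : Lmap k s γ j (D k s γ j')
      = (∑ d : Fin (Nt k s γ (γ j) + 1),
          if ((d : ℕ) ≤ nit k s γ j (γ j) ∧ γ j = γ j') ∧ (d : ℕ) = nit k s γ j' (γ j') + 1
            then (1 : ℤ) else 0)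
        - (∑ d : Fin (Nt k s γ (γ j) + 1),
          if ((d : ℕ) ≤ nit k s γ j (γ j) ∧ γ j = γ j') ∧ (d : ℕ) = nit k s γ j' (γ j')
            then (1 : ℤ) else 0) := by
    rw [show Lmap k s γ j (D k s γ j') = ∑ d : Fin (Nt k s γ (γ j) + 1),
        if (d : ℕ) ≤ nit k s γ j (γ j) then D k s γ j' ⟨γ j, d⟩ else 0 from rfl]
    rw [← Finset.sum_sub_distrib]
    apply Finset.sum_congr rfl
    intro d _
    rw [show D k s γ j' ⟨γ j, d⟩ =
        (if γ j = γ j' ∧ (d : ℕ) = nit k s γ j' (γ j') + 1 then (1 : ℤ) else 0)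
        - (if γ j = γ j' ∧ (d : ℕ) = nit k s γ j' (γ j') then (1 : ℤ) else 0) from rfl]
    by_cases hg2 : γ j = γ j'
    · simp only [hg2, true_and, and_true]
      split_ifs <;> omega
    · simp [hg2]
  rw [hexp, sum_ite_eq_nat k s γ (γ j)
        (fun x => x ≤ nit k s γ j (γ j) ∧ γ j = γ j') (nit k s γ j' (γ j') + 1),
      sum_ite_eq_nat k s γ (γ j)
        (fun x => x ≤ nit k s γ j (γ j) ∧ γ j = γ j') (nit k s γ j' (γ j'))]
  by_cases hjj : γ j = γ j'
  · have hmN : nit k s γ j' (γ j') + 1 ≤ Nt k s γ (γ j) := by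
      have h1 := nit_lt_Nt k s γ j'
      have h2 : Nt k s γ (γ j') = Nt k s γ (γ j) := by rw [hjj]
      omega
    by_cases hjj2 : j' = j
    · subst hjj2
      rw [if_pos rfl, if_neg (by omega), if_pos (by refine ⟨⟨le_refl _, rfl⟩, by omega⟩)]
      norm_num
    · have hmn : nit k s γ j' (γ j') ≠ nit k s γ j (γ j) := fun h =>
        hjj2 (phi_inj k s γ hjj.symm h)
      rw [if_neg hjj2]
      rcases Nat.lt_or_ge (nit k s γ j' (γ j')) (nit k s γ j (γ j)) with hlt | hge
      · rw [if_pos ⟨⟨hlt, hjj⟩, hmN⟩, if_pos ⟨⟨by omega, hjj⟩, by omega⟩]; ring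
      · rw [if_neg (by rintro ⟨⟨h, -⟩, -⟩; omega), if_neg (by rintro ⟨⟨h, -⟩, -⟩; omega)]
        ring
  · have hjj2 : j' ≠ j := fun h => hjj (by rw [h])
    rw [if_neg (by tauto), if_neg (by tauto), if_neg hjj2]
    ring

lemma Lmap_tau (j : Fin (k + 1)) (i : Fin k) :
    Lmap k s γ j (tauvec k s γ i) =
      (if i.castSucc = j then (-1 : ℤ) else 0) - (if i.succ = j then (-1 : ℤ) else 0) := by
  rw [tauvec_eq, map_sub, Lmap_D, Lmap_D]

lemma tau_indep : LinearIndependent ℤ (tauvec k s γ) := by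
  rw [Fintype.linearIndependent_iff]
  intro g hg
  have key : ∀ j : Fin (k + 1),
      (∑ i : Fin k, if i.succ = j then g i else 0)
        = ∑ i : Fin k, if i.castSucc = j then g i else 0 := by
    intro j
    have h0 := congrArg (Lmap k s γ j) hg
    rw [map_sum, map_zero] at h0
    simp only [map_smul, smul_eq_mul, Lmap_tau] at h0
    have h1 : ∑ i : Fin k, ((if i.succ = j then g i else 0)
        - (if i.castSucc = j then g i else 0)) = 0 := by
      have hcong : (∑ i : Fin k, ((if i.succ = j then g i else 0)
          - (if i.castSucc = j then g i else 0)))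
          = ∑ x : Fin k, g x * ((if x.castSucc = j then -1 else 0)
              - if x.succ = j then -1 else 0) :=
        Finset.sum_congr rfl (fun i _ => by split_ifs <;> ring)
      rw [hcong, h0]
    rw [Finset.sum_sub_distrib] at h1
    exact sub_eq_zero.mp h1
  have main : ∀ n : ℕ, ∀ i : Fin k, (i : ℕ) = n → g i = 0 := by
    intro n
    induction n using Nat.strong_induction_on with
    | _ n ih =>
      intro i hi
      have hR : (∑ i' : Fin k, if i'.castSucc = i.castSucc then g i' else 0) = g i := by
        rw [Finset.sum_eq_single i]
        · rw [if_pos rfl]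
        · intro b _ hb
          rw [if_neg (fun h => hb (Fin.castSucc_inj.mp h))]
        · simp
      have hL : (∑ i' : Fin k, if i'.succ = i.castSucc then g i' else 0) = 0 := by
        apply Finset.sum_eq_zero
        intro i' _
        split_ifs with h
        · have hv := congrArg Fin.val h
          simp only [Fin.val_succ, Fin.coe_castSucc] at hv
          exact ih i'.val (by omega) i' rfl
        · rfl
      have := key i.castSucc
      rw [hR, hL] at this
      exact this.symm
  intro i
  exact main i.val i rfl



lemma card_filter_lt (t : Fin (s + 1)) (δ : ℕ) (hδ : δ ≤ Nt k s γ t) :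
    (Finset.univ.filter fun j => γ j = t ∧ nit k s γ j t < δ).card = δ := by
  have hbij : (Finset.univ.filter fun j => γ j = t ∧ nit k s γ j t < δ).card
      = (Finset.range δ).card := by
    apply Finset.card_bij (fun j _ => nit k s γ j t)
    · intro a ha
      simp only [Finset.mem_filter] at ha
      exact Finset.mem_range.mpr ha.2.2
    · intro a ha b hb hab
      simp only [Finset.mem_filter] at ha hb
      exact phi_inj k s γ (ha.2.1.trans hb.2.1.symm)
        (by rw [ha.2.1, hb.2.1]; exact hab)
    · intro m hm
      obtain ⟨j, hj1, hj2⟩ := phi_surj k s γ t m (lt_of_lt_of_le (Finset.mem_range.mp hm) hδ)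
      exact ⟨j, Finset.mem_filter.mpr ⟨Finset.mem_univ _,
        hj1, by rw [hj2]; exact Finset.mem_range.mp hm⟩, hj2⟩
  rw [hbij, Finset.card_range]

/-- Partial sums `Sf y t m = ∑_{δ' ≥ m} y (t, δ')`. -/
def Sf (y : E k s γ → ℤ) (t : Fin (s + 1)) (m : ℕ) : ℤ :=
  ∑ d : Fin (Nt k s γ t + 1), if m ≤ (d : ℕ) then y ⟨t, d⟩ else 0

def Av (y : E k s γ → ℤ) (j : Fin (k + 1)) : ℤ :=
  Sf k s γ y (γ j) (nit k s γ j (γ j) + 1)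

def Cv (y : E k s γ → ℤ) (j : Fin (k + 1)) : ℤ :=
  ∑ l, if l ≤ j then Av k s γ y l else 0

lemma Sf_top (y : E k s γ → ℤ) (t : Fin (s + 1)) (m : ℕ) (hm : Nt k s γ t < m) :
    Sf k s γ y t m = 0 := by
  apply Finset.sum_eq_zero
  intro d _
  have := d.isLt
  rw [if_neg (by omega)]

lemma Sf_diff (y : E k s γ → ℤ) (t : Fin (s + 1)) (m : ℕ) (hm : m < Nt k s γ t + 1) :
    Sf k s γ y t m - Sf k s γ y t (m + 1) = y ⟨t, ⟨m, hm⟩⟩ := by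
  rw [Sf, Sf, ← Finset.sum_sub_distrib, Finset.sum_eq_single (⟨m, hm⟩ : Fin (Nt k s γ t + 1))]
  · simp
  · intro d _ hne
    have hdm : (d : ℕ) ≠ m := fun h => hne (Fin.ext h)
    split_ifs <;> first | ring1 | (exfalso; omega)
  · simp

lemma claim2 (y : E k s γ → ℤ) (t : Fin (s + 1)) (dv : ℕ) (hdv : dv ≤ Nt k s γ t) :
    (∑ j, Av k s γ y j * (if t = γ j ∧ dv = nit k s γ j (γ j) then 1 else 0))
      = Sf k s γ y t (dv + 1) := by
  rcases Nat.lt_or_ge dv (Nt k s γ t) with hlt | hge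
  · obtain ⟨j₁, hj1, hj2⟩ := phi_surj k s γ t dv hlt
    rw [Finset.sum_eq_single j₁]
    · rw [if_pos ⟨hj1.symm, by rw [hj1]; exact hj2.symm⟩, mul_one, Av, hj1]
      rw [show nit k s γ j₁ t = dv from hj2]
    · intro j _ hne
      rw [if_neg, mul_zero]
      rintro ⟨ht, hd⟩
      refine hne (phi_inj k s γ (show γ j = γ j₁ by rw [← ht, hj1]) ?_)
      rw [← hd]
      rw [show γ j₁ = t from hj1, hj2]
    · simp
  · have hd : dv = Nt k s γ t := le_antisymm hdv hge
    rw [Sf_top k s γ y t _ (by omega)]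
    apply Finset.sum_eq_zero
    intro j _
    rw [if_neg, mul_zero]
    rintro ⟨ht, hd2⟩
    have h1 := nit_lt_Nt k s γ j
    have h2 : Nt k s γ (γ j) = Nt k s γ t := by rw [← ht]
    omega

lemma claim1 (y : E k s γ → ℤ) (t : Fin (s + 1)) (hZt : Sf k s γ y t 0 = 0)
    (dv : ℕ) (hdv : dv ≤ Nt k s γ t) :
    (∑ j, Av k s γ y j * (if t = γ j ∧ dv = nit k s γ j (γ j) + 1 then 1 else 0))
      = Sf k s γ y t dv := by
  cases dv with
  | zero =>
    rw [hZt]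
    apply Finset.sum_eq_zero
    intro j _
    rw [if_neg, mul_zero]
    rintro ⟨-, h⟩
    omega
  | succ m =>
    rw [← claim2 k s γ y t m (by omega)]
    apply Finset.sum_congr rfl
    intro j _
    congr 1
    apply if_congr ?_ rfl rfl
    constructor
    · rintro ⟨a, b⟩; exact ⟨a, by omega⟩
    · rintro ⟨a, b⟩; exact ⟨a, by omega⟩

lemma y_eq_sum (y : E k s γ → ℤ) (hZ : ∀ t, Sf k s γ y t 0 = 0) :
    y = ∑ j, Av k s γ y j • D k s γ j := by
  funext e
  rcases e with ⟨t, dF⟩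
  rw [Finset.sum_apply]
  have hexp : ∀ j, (Av k s γ y j • D k s γ j) ⟨t, dF⟩
      = Av k s γ y j * (if t = γ j ∧ (dF : ℕ) = nit k s γ j (γ j) + 1 then 1 else 0)
        - Av k s γ y j * (if t = γ j ∧ (dF : ℕ) = nit k s γ j (γ j) then 1 else 0) := by
    intro j
    rw [Pi.smul_apply, smul_eq_mul,
      show D k s γ j ⟨t, dF⟩
        = (if t = γ j ∧ (dF : ℕ) = nit k s γ j (γ j) + 1 then (1 : ℤ) else 0)
          - (if t = γ j ∧ (dF : ℕ) = nit k s γ j (γ j) then (1 : ℤ) else 0) from rfl]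
    ring
  have hb : (dF : ℕ) ≤ Nt k s γ t := by have := dF.isLt; omega
  rw [Finset.sum_congr rfl (fun j _ => hexp j), Finset.sum_sub_distrib,
    claim1 k s γ y t (hZ t) (dF : ℕ) hb, claim2 k s γ y t (dF : ℕ) hb]
  have h := Sf_diff k s γ y t (dF : ℕ) dF.isLt
  exact h.symm


lemma sumA (y : E k s γ → ℤ) (hu : ∑ e : E k s γ, y e * ((e.2 : ℕ) : ℤ) = 0) :
    ∑ j, Av k s γ y j = 0 := by
  have hA' : ∀ j, Av k s γ y j
      = ∑ e : E k s γ, if γ j = e.1 ∧ nit k s γ j (γ j) < (e.2 : ℕ) then y e else 0 := by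
    intro j
    rw [← Finset.univ_sigma_univ, Finset.sum_sigma,
      Finset.sum_eq_single (γ j)
        (fun t' _ hne => Finset.sum_eq_zero (fun d _ => if_neg (fun hc => hne hc.1.symm)))
        (by simp)]
    rw [Av, Sf]
    apply Finset.sum_congr rfl
    intro d _
    exact if_congr ⟨fun h => ⟨rfl, h⟩, fun h => h.2⟩ rfl rfl
  calc ∑ j, Av k s γ y j
      = ∑ j, ∑ e : E k s γ,
          if γ j = e.1 ∧ nit k s γ j (γ j) < (e.2 : ℕ) then y e else 0 :=
        Finset.sum_congr rfl (fun j _ => hA' j)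
    _ = ∑ e : E k s γ, ∑ j,
          if γ j = e.1 ∧ nit k s γ j (γ j) < (e.2 : ℕ) then y e else 0 := Finset.sum_comm
    _ = ∑ e : E k s γ, y e * ((e.2 : ℕ) : ℤ) := by
        apply Finset.sum_congr rfl
        intro e _
        rw [← Finset.sum_filter]
        rw [Finset.sum_const]
        have hfil : (Finset.univ.filter fun j => γ j = e.1 ∧ nit k s γ j (γ j) < (e.2 : ℕ))
            = Finset.univ.filter fun j => γ j = e.1 ∧ nit k s γ j e.1 < (e.2 : ℕ) := by
          apply Finset.filter_congr
          intro j _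
          constructor
          · rintro ⟨h1, h2⟩
            refine ⟨h1, ?_⟩
            have h3 : nit k s γ j e.1 = nit k s γ j (γ j) := by rw [h1]
            omega
          · rintro ⟨h1, h2⟩
            refine ⟨h1, ?_⟩
            have h3 : nit k s γ j e.1 = nit k s γ j (γ j) := by rw [h1]
            omega
        rw [hfil, card_filter_lt k s γ e.1 (e.2 : ℕ) (by have := e.2.isLt; omega)]
        rw [nsmul_eq_mul, mul_comm]
    _ = 0 := hu

lemma comp_u (y : E k s γ → ℤ) (h : Ptilde k s γ y = 0) :
    ∑ e : E k s γ, y e * ((e.2 : ℕ) : ℤ) = 0 := by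
  have h1 : (Ptilde k s γ y).1 = 0 := by rw [h]; rfl
  rw [Ptilde, Prod.fst_sum] at h1
  rw [← h1]
  apply Finset.sum_congr rfl
  intro e _
  rw [Prod.smul_fst, wvec, smul_eq_mul]

lemma comp_z (y : E k s γ → ℤ) (h : Ptilde k s γ y = 0) (t : Fin (s + 1)) :
    Sf k s γ y t 0 = 0 := by
  have h3 : (Ptilde k s γ y).2.2 t = 0 := by rw [h]; rfl
  rw [Ptilde, Prod.snd_sum, Prod.snd_sum, Finset.sum_apply] at h3
  have h4 : ∀ e : E k s γ, ((y e • wvec k s γ e.1 (e.2 : ℕ)).2.2) t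
      = y e * (if t = e.1 then 1 else 0) := by
    intro e
    rw [Prod.smul_snd, Prod.smul_snd, wvec, Pi.smul_apply, smul_eq_mul]
  rw [Finset.sum_congr rfl (fun e _ => h4 e)] at h3
  rw [← Finset.univ_sigma_univ, Finset.sum_sigma] at h3
  rw [Finset.sum_eq_single t
    (fun t' _ hne => Finset.sum_eq_zero
      (fun d _ => by rw [if_neg (fun hc => hne hc.symm), mul_zero]))
    (by simp)] at h3
  rw [Sf]
  rw [← h3]
  apply Finset.sum_congr rfl
  intro d _
  rw [if_pos (Nat.zero_le _), if_pos rfl, mul_one]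

lemma abel_sum (y : E k s γ → ℤ) (hA : ∑ j, Av k s γ y j = 0) :
    ∑ i : Fin k, Cv k s γ y i.castSucc • tauvec k s γ i
      = ∑ j, Av k s γ y j • D k s γ j := by
  have hC0 : Cv k s γ y 0 = Av k s γ y 0 := by
    rw [Cv, Finset.sum_eq_single 0]
    · rw [if_pos (le_refl _)]
    · intro b _ hb
      rw [if_neg (fun h => hb (Fin.le_zero_iff.mp h))]
    · simp
  have hClast : Cv k s γ y (Fin.last k) = 0 := by
    rw [Cv, Finset.sum_congr rfl (fun l _ => if_pos (Fin.le_last l))]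
    exact hA
  have hCsucc : ∀ i : Fin k,
      Cv k s γ y i.castSucc = Cv k s γ y i.succ - Av k s γ y i.succ := by
    intro i
    rw [eq_sub_iff_add_eq, Cv, Cv]
    have : Av k s γ y i.succ = ∑ l, if l = i.succ then Av k s γ y l else 0 := by
      rw [Finset.sum_ite_eq' Finset.univ i.succ (fun l => Av k s γ y l)]
      simp
    rw [this, ← Finset.sum_add_distrib]
    apply Finset.sum_congr rfl
    intro l _
    simp only [Fin.le_def, Fin.ext_iff, Fin.val_succ, Fin.coe_castSucc]
    split_ifs <;> first | ring1 | (exfalso; omega)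
  have ecs : ∑ i : Fin k, Cv k s γ y i.castSucc • D k s γ i.castSucc
      = (∑ j, Cv k s γ y j • D k s γ j) - Cv k s γ y (Fin.last k) • D k s γ (Fin.last k) := by
    rw [Fin.sum_univ_castSucc (f := fun j => Cv k s γ y j • D k s γ j)]
    abel
  have esucc : ∑ i : Fin k, Cv k s γ y i.succ • D k s γ i.succ
      = (∑ j, Cv k s γ y j • D k s γ j) - Cv k s γ y 0 • D k s γ 0 := by
    rw [Fin.sum_univ_succ (f := fun j => Cv k s γ y j • D k s γ j)]
    abel
  have eA : ∑ i : Fin k, Av k s γ y i.succ • D k s γ i.succ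
      = (∑ j, Av k s γ y j • D k s γ j) - Av k s γ y 0 • D k s γ 0 := by
    rw [Fin.sum_univ_succ (f := fun j => Av k s γ y j • D k s γ j)]
    abel
  calc ∑ i : Fin k, Cv k s γ y i.castSucc • tauvec k s γ i
      = ∑ i : Fin k, (Cv k s γ y i.castSucc • D k s γ i.castSucc
          - Cv k s γ y i.castSucc • D k s γ i.succ) := by
        apply Finset.sum_congr rfl
        intro i _
        rw [tauvec_eq, smul_sub]
    _ = (∑ i : Fin k, Cv k s γ y i.castSucc • D k s γ i.castSucc)
        - ∑ i : Fin k, Cv k s γ y i.castSucc • D k s γ i.succ := by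
        rw [Finset.sum_sub_distrib]
    _ = (∑ i : Fin k, Cv k s γ y i.castSucc • D k s γ i.castSucc)
        - ((∑ i : Fin k, Cv k s γ y i.succ • D k s γ i.succ)
          - ∑ i : Fin k, Av k s γ y i.succ • D k s γ i.succ) := by
        congr 1
        rw [← Finset.sum_sub_distrib]
        apply Finset.sum_congr rfl
        intro i _
        rw [hCsucc i, sub_smul]
    _ = ∑ j, Av k s γ y j • D k s γ j := by
        rw [ecs, esucc, eA, hC0, hClast, zero_smul]
        abel

end StmtAux

/-- The vectors `τ_1, …, τ_k` all lie in the kernel of `P̃` and form a ℤ-basis of it. -/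
theorem stmt11 (k s : ℕ) (hk : 1 ≤ k) (γ : Fin (k + 1) → Fin (s + 1))
    (hγ : Function.Surjective γ) :
    (∀ i : Fin k, Ptilde k s γ (tauvec k s γ i) = 0) ∧
      LinearIndependent ℤ (tauvec k s γ) ∧
      ∀ y : ((t : Fin (s + 1)) × Fin (Nt k s γ t + 1)) → ℤ,
        Ptilde k s γ y = 0 → ∃ c : Fin k → ℤ, y = ∑ i, c i • tauvec k s γ i := by
  refine ⟨StmtAux.Ptilde_tau k s γ, StmtAux.tau_indep k s γ, ?_⟩
  intro y hy
  refine ⟨fun i => StmtAux.Cv k s γ y i.castSucc, ?_⟩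
  exact (StmtAux.y_eq_sum k s γ y (StmtAux.comp_z k s γ y hy)).trans
    (StmtAux.abel_sum k s γ y (StmtAux.sumA k s γ y (StmtAux.comp_u k s γ y hy))).symm
end

section
/- For every i ∈ {0,…,k}, one has ϑ̃(γ(i), n^i_{γ(i)} + 1) − ϑ̃(γ(i), n^i_{γ(i)}) = ϑ_i. (That is, the successive difference of maxima of sums over subsets of the fibre γ⁻¹(γ(i)) at size n^i_{γ(i)} picks out exactly the value ϑ_i; note n^i_{γ(i)} + 1 ≤ N_{γ(i)}, so both terms are defined.) -/
/-- `ϑ̃(t,δ) = max { Σ_{d∈D} ϑ_d : D ⊆ γ⁻¹(t), #D = δ }`, the sum of the `δ` biggest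
values of `ϑ` on the fibre `γ⁻¹(t)` (so `ϑ̃(t,0) = 0`). -/
noncomputable def thetaT (k s : ℕ) (γ : Fin (k + 1) → Fin (s + 1))
    (ϑ : Fin (k + 1) → ℝ) (t : Fin (s + 1)) (δ : ℕ) : ℝ :=
  sSup {x : ℝ | ∃ D : Finset (Fin (k + 1)),
    (∀ j ∈ D, γ j = t) ∧ D.card = δ ∧ x = ∑ d ∈ D, ϑ d}

lemma sum_le_sum_key {α : Type*} [DecidableEq α] (F D D₀ : Finset α) (ϑ : α → ℝ)
    (hD : D ⊆ F) (hcard : D.card = D₀.card)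
    (h : ∀ a ∈ D₀, ∀ b ∈ F, b ∉ D₀ → ϑ b ≤ ϑ a) :
    ∑ d ∈ D, ϑ d ≤ ∑ d ∈ D₀, ϑ d := by
  have h1 : ∑ d ∈ D ∩ D₀, ϑ d + ∑ d ∈ D \ D₀, ϑ d = ∑ d ∈ D, ϑ d :=
    Finset.sum_inter_add_sum_sdiff D D₀ ϑ
  have h2 : ∑ d ∈ D₀ ∩ D, ϑ d + ∑ d ∈ D₀ \ D, ϑ d = ∑ d ∈ D₀, ϑ d :=
    Finset.sum_inter_add_sum_sdiff D₀ D ϑ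
  have hmc : (D \ D₀).card = (D₀ \ D).card := by
    have e1 := Finset.card_inter_add_card_sdiff D D₀
    have e2 := Finset.card_inter_add_card_sdiff D₀ D
    have e3 : (D ∩ D₀).card = (D₀ ∩ D).card := by rw [Finset.inter_comm]
    omega
  have hdiff : ∑ d ∈ D \ D₀, ϑ d ≤ ∑ d ∈ D₀ \ D, ϑ d := by
    rcases Finset.eq_empty_or_nonempty (D₀ \ D) with he | hne
    · have : (D \ D₀) = ∅ := Finset.card_eq_zero.mp (by rw [hmc, he]; simp)
      simp [this, he]
    · set c := (D₀ \ D).inf' hne ϑ with hc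
      have hbc : ∀ x ∈ D \ D₀, ϑ x ≤ c := by
        intro x hx
        apply Finset.le_inf'
        intro y hy
        exact h y (Finset.sdiff_subset hy) x (hD (Finset.sdiff_subset hx))
          (Finset.mem_sdiff.mp hx).2
      calc ∑ d ∈ D \ D₀, ϑ d ≤ (D \ D₀).card • c := Finset.sum_le_card_nsmul _ _ _ hbc
        _ = (D₀ \ D).card • c := by rw [hmc]
        _ ≤ ∑ d ∈ D₀ \ D, ϑ d := Finset.card_nsmul_le_sum _ _ _
          (fun y hy => Finset.inf'_le _ hy)
  have h3 : ∑ d ∈ D ∩ D₀, ϑ d = ∑ d ∈ D₀ ∩ D, ϑ d := by rw [Finset.inter_comm]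
  linarith

/-- For every `i ∈ {0,…,k}`,
`ϑ̃(γ(i), n^i_{γ(i)} + 1) − ϑ̃(γ(i), n^i_{γ(i)}) = ϑ_i`. -/
theorem stmt12 (k s : ℕ) (hk : 1 ≤ k) (γ : Fin (k + 1) → Fin (s + 1))
    (hγ : Function.Surjective γ) (ϑ : Fin (k + 1) → ℝ) (hϑ : StrictAnti ϑ)
    (i : Fin (k + 1)) :
    thetaT k s γ ϑ (γ i) (nit k s γ i (γ i) + 1) -
        thetaT k s γ ϑ (γ i) (nit k s γ i (γ i)) = ϑ i := by
  classical
  set t := γ i with ht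
  set F : Finset (Fin (k + 1)) := Finset.univ.filter (fun j => γ j = t) with hF
  set D₀ : Finset (Fin (k + 1)) := Finset.univ.filter (fun j => γ j = t ∧ j < i) with hD₀
  have hD₀F : D₀ ⊆ F := by
    intro j hj
    simp only [hD₀, hF, Finset.mem_filter, Finset.mem_univ, true_and] at *
    exact hj.1
  have hiD₀ : i ∉ D₀ := by simp [hD₀]
  set D₁ : Finset (Fin (k + 1)) := insert i D₀ with hD₁
  have hcard₀ : D₀.card = nit k s γ i (γ i) := rfl
  have hcard₁ : D₁.card = nit k s γ i (γ i) + 1 := by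
    rw [hD₁, Finset.card_insert_of_notMem hiD₀, hcard₀]
  have hG₀ : IsGreatest {x : ℝ | ∃ D : Finset (Fin (k + 1)),
      (∀ j ∈ D, γ j = t) ∧ D.card = nit k s γ i (γ i) ∧ x = ∑ d ∈ D, ϑ d}
      (∑ d ∈ D₀, ϑ d) := by
    constructor
    · exact ⟨D₀, fun j hj => (Finset.mem_filter.mp hj).2.1, hcard₀, rfl⟩
    · rintro x ⟨D, hDt, hDc, rfl⟩
      apply sum_le_sum_key F D D₀
      · intro j hj; simp only [hF, Finset.mem_filter, Finset.mem_univ, true_and]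
        exact hDt j hj
      · rw [hDc, hcard₀]
      · intro a ha b hb hb'
        simp only [hD₀, hF, Finset.mem_filter, Finset.mem_univ, true_and] at ha hb hb'
        have hab : a < b := lt_of_lt_of_le ha.2 (le_of_not_gt (fun h => hb' ⟨hb, h⟩))
        exact (hϑ hab).le
  have hG₁ : IsGreatest {x : ℝ | ∃ D : Finset (Fin (k + 1)),
      (∀ j ∈ D, γ j = t) ∧ D.card = nit k s γ i (γ i) + 1 ∧ x = ∑ d ∈ D, ϑ d}
      (∑ d ∈ D₁, ϑ d) := by
    constructor
    · refine ⟨D₁, ?_, hcard₁, rfl⟩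
      intro j hj
      rcases Finset.mem_insert.mp hj with rfl | hj
      · rfl
      · exact (Finset.mem_filter.mp hj).2.1
    · rintro x ⟨D, hDt, hDc, rfl⟩
      apply sum_le_sum_key F D D₁
      · intro j hj; simp only [hF, Finset.mem_filter, Finset.mem_univ, true_and]
        exact hDt j hj
      · rw [hDc, hcard₁]
      · intro a ha b hb hb'
        have hai : a ≤ i := by
          rcases Finset.mem_insert.mp ha with rfl | ha
          · exact le_refl a
          · exact le_of_lt (Finset.mem_filter.mp ha).2.2
        have hbi : i < b := by
          simp only [hD₁, Finset.mem_insert, hD₀, Finset.mem_filter, Finset.mem_univ,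
            true_and, not_or] at hb'
          have hbt : γ b = t := by
            simpa [hF] using hb
          rcases lt_trichotomy i b with h | h | h
          · exact h
          · exact absurd h.symm hb'.1
          · exact absurd ⟨hbt, h⟩ hb'.2
        exact (hϑ (lt_of_le_of_lt hai hbi)).le
  have e₀ : thetaT k s γ ϑ (γ i) (nit k s γ i (γ i)) = ∑ d ∈ D₀, ϑ d :=
    hG₀.csSup_eq
  have e₁ : thetaT k s γ ϑ (γ i) (nit k s γ i (γ i) + 1) = ∑ d ∈ D₁, ϑ d :=
    hG₁.csSup_eq
  rw [e₀, e₁, hD₁, Finset.sum_insert hiD₀]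
  ring
end

section
/- For every i ∈ {1,…,k}, one has ϑ̃(γ(i−1), n^{i−1}_{γ(i−1)} + 1) − ϑ̃(γ(i−1), n^{i−1}_{γ(i−1)}) − ϑ̃(γ(i), n^{i}_{γ(i)} + 1) + ϑ̃(γ(i), n^{i}_{γ(i)}) = ϑ_{i−1} − ϑ_i. (This is the computation θ̃(τ_i) = θ_i showing that the character induced on the torus (ℂ*)^k by a standard stability condition takes the value ϑ_{i−1} − ϑ_i on the i-th basis vector τ_i of the kernel lattice.) -/
/-- Among subsets of the fibre of fixed cardinality, a downward-closed one maximizes the sum. -/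
lemma key_le (k s : ℕ) (γ : Fin (k + 1) → Fin (s + 1)) (ϑ : Fin (k + 1) → ℝ)
    (hϑ : StrictAnti ϑ) (t : Fin (s + 1)) (D₀ : Finset (Fin (k + 1)))
    (hD₀ : ∀ j ∈ D₀, γ j = t)
    (hdc : ∀ d₀ ∈ D₀, ∀ d, γ d = t → d ∉ D₀ → d₀ < d) :
    ∀ m (D : Finset (Fin (k + 1))), (D \ D₀).card = m → (∀ j ∈ D, γ j = t) →
      D.card = D₀.card → ∑ d ∈ D, ϑ d ≤ ∑ d ∈ D₀, ϑ d := by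
  intro m
  induction m with
  | zero =>
    intro D hDm hDt hcard
    have hsub : D ⊆ D₀ := by
      rwa [Finset.card_eq_zero, Finset.sdiff_eq_empty_iff_subset] at hDm
    rw [Finset.eq_of_subset_of_card_le hsub hcard.ge]
  | succ m ih =>
    intro D hDm hDt hcard
    have hne : (D \ D₀).Nonempty := by rw [← Finset.card_pos, hDm]; omega
    obtain ⟨d, hd⟩ := hne
    have hd' := Finset.mem_sdiff.mp hd
    have hne₀ : (D₀ \ D).Nonempty := by
      rw [← Finset.card_pos, Finset.card_sdiff_comm hcard.symm, hDm]; omega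
    obtain ⟨d₀, hd₀⟩ := hne₀
    have hd₀' := Finset.mem_sdiff.mp hd₀
    have hd₀e : d₀ ∉ D.erase d := fun h => hd₀'.2 (Finset.mem_of_mem_erase h)
    have hlt : d₀ < d := hdc d₀ hd₀'.1 d (hDt d hd'.1) hd'.2
    have hcardD : 1 ≤ D.card := Finset.card_pos.mpr ⟨d, hd'.1⟩
    set D' := insert d₀ (D.erase d) with hD'
    have hDt' : ∀ j ∈ D', γ j = t := by
      intro j hj
      rcases Finset.mem_insert.mp hj with h | h
      · exact h ▸ hD₀ d₀ hd₀'.1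
      · exact hDt j (Finset.mem_of_mem_erase h)
    have hcard' : D'.card = D₀.card := by
      rw [hD', Finset.card_insert_of_notMem hd₀e, Finset.card_erase_of_mem hd'.1]
      omega
    have hDm' : (D' \ D₀).card = m := by
      have hset : D' \ D₀ = (D \ D₀).erase d := by
        ext x
        simp only [hD', Finset.mem_sdiff, Finset.mem_erase, Finset.mem_insert]
        constructor
        · rintro ⟨h1 | ⟨h1, h2⟩, h3⟩
          · exact absurd (h1 ▸ hd₀'.1) h3
          · exact ⟨h1, h2, h3⟩
        · rintro ⟨h1, h2, h3⟩
          exact ⟨Or.inr ⟨h1, h2⟩, h3⟩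
      rw [hset, Finset.card_erase_of_mem hd, hDm]
      omega
    have hsum : ∑ x ∈ D, ϑ x ≤ ∑ x ∈ D', ϑ x := by
      rw [hD', Finset.sum_insert hd₀e,
        ← Finset.add_sum_erase D ϑ hd'.1]
      have := (hϑ hlt).le
      gcongr
    exact hsum.trans (ih D' hDm' hDt' hcard')

lemma thetaT_eq_sum (k s : ℕ) (γ : Fin (k + 1) → Fin (s + 1)) (ϑ : Fin (k + 1) → ℝ)
    (hϑ : StrictAnti ϑ) (t : Fin (s + 1)) (D₀ : Finset (Fin (k + 1)))
    (hD₀ : ∀ j ∈ D₀, γ j = t)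
    (hdc : ∀ d₀ ∈ D₀, ∀ d, γ d = t → d ∉ D₀ → d₀ < d) :
    thetaT k s γ ϑ t D₀.card = ∑ d ∈ D₀, ϑ d := by
  apply IsGreatest.csSup_eq
  constructor
  · exact ⟨D₀, hD₀, rfl, rfl⟩
  · rintro x ⟨D, hDt, hcard, rfl⟩
    exact key_le k s γ ϑ hϑ t D₀ hD₀ hdc _ D rfl hDt hcard

lemma thetaT_step (k s : ℕ) (γ : Fin (k + 1) → Fin (s + 1)) (ϑ : Fin (k + 1) → ℝ)
    (hϑ : StrictAnti ϑ) (j : Fin (k + 1)) :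
    thetaT k s γ ϑ (γ j) (nit k s γ j (γ j) + 1) -
      thetaT k s γ ϑ (γ j) (nit k s γ j (γ j)) = ϑ j := by
  set t := γ j with ht
  set D₀ : Finset (Fin (k + 1)) := Finset.univ.filter (fun d => γ d = t ∧ d < j) with hD₀def
  have hnit : nit k s γ j t = D₀.card := rfl
  have hmem₀ : ∀ d, d ∈ D₀ ↔ γ d = t ∧ d < j := by
    intro d; simp [hD₀def]
  have hD₀t : ∀ d ∈ D₀, γ d = t := fun d hd => ((hmem₀ d).mp hd).1
  have h1 : thetaT k s γ ϑ t D₀.card = ∑ d ∈ D₀, ϑ d := by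
    apply thetaT_eq_sum k s γ ϑ hϑ t D₀ hD₀t
    intro d₀ hd₀ d hdt hdn
    have h₁ := ((hmem₀ d₀).mp hd₀).2
    have h₂ : ¬ d < j := fun h => hdn ((hmem₀ d).mpr ⟨hdt, h⟩)
    exact lt_of_lt_of_le h₁ (not_lt.mp h₂)
  have hjD₀ : j ∉ D₀ := fun h => lt_irrefl j ((hmem₀ j).mp h).2
  set D₁ := insert j D₀ with hD₁def
  have hmem₁ : ∀ d, d ∈ D₁ ↔ γ d = t ∧ d ≤ j := by
    intro d
    simp only [hD₁def, Finset.mem_insert, hmem₀]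
    constructor
    · rintro (rfl | ⟨h1, h2⟩)
      · exact ⟨ht.symm, le_refl _⟩
      · exact ⟨h1, h2.le⟩
    · rintro ⟨h1, h2⟩
      rcases eq_or_lt_of_le h2 with h | h
      · exact Or.inl (Fin.eq_of_val_eq (congrArg Fin.val h))
      · exact Or.inr ⟨h1, h⟩
  have hcard₁ : D₁.card = D₀.card + 1 := Finset.card_insert_of_notMem hjD₀
  have h2 : thetaT k s γ ϑ t D₁.card = ∑ d ∈ D₁, ϑ d := by
    apply thetaT_eq_sum k s γ ϑ hϑ t D₁ (fun d hd => ((hmem₁ d).mp hd).1)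
    intro d₀ hd₀ d hdt hdn
    have h₁ := ((hmem₁ d₀).mp hd₀).2
    have h₂ : ¬ d ≤ j := fun h => hdn ((hmem₁ d).mpr ⟨hdt, h⟩)
    exact lt_of_le_of_lt h₁ (not_le.mp h₂)
  rw [hnit, ← hcard₁, h1, h2, hD₁def, Finset.sum_insert hjD₀]
  ring

/-- For every `i ∈ {1,…,k}` (represented by `i : Fin k`, with paper indices
`i−1 = i.castSucc` and `i = i.succ`):
`ϑ̃(γ(i−1), n^{i−1}_{γ(i−1)} + 1) − ϑ̃(γ(i−1), n^{i−1}_{γ(i−1)})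
 − ϑ̃(γ(i), n^{i}_{γ(i)} + 1) + ϑ̃(γ(i), n^{i}_{γ(i)}) = ϑ_{i−1} − ϑ_i`. -/
theorem stmt13 (k s : ℕ) (hk : 1 ≤ k) (γ : Fin (k + 1) → Fin (s + 1))
    (hγ : Function.Surjective γ) (ϑ : Fin (k + 1) → ℝ) (hϑ : StrictAnti ϑ)
    (i : Fin k) :
    thetaT k s γ ϑ (γ i.castSucc) (nit k s γ i.castSucc (γ i.castSucc) + 1) -
        thetaT k s γ ϑ (γ i.castSucc) (nit k s γ i.castSucc (γ i.castSucc)) -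
        thetaT k s γ ϑ (γ i.succ) (nit k s γ i.succ (γ i.succ) + 1) +
        thetaT k s γ ϑ (γ i.succ) (nit k s γ i.succ (γ i.succ)) =
      ϑ i.castSucc - ϑ i.succ := by
  have h1 := thetaT_step k s γ ϑ hϑ i.castSucc
  have h2 := thetaT_step k s γ ϑ hϑ i.succ
  linarith
end

section
/- The following are equivalent: (1) for every nonempty subset J ⊆ {0,…,s}, the polynomial F_J = Σ_{t∈J} f_t(U,V)·Z_t has no critical point all of whose coordinates (the U, V coordinates and the Z_t coordinates for t ∈ J) are nonzero; (2) for every t ∈ {0,…,s} the one-variable polynomial f_t(X,1) ∈ ℂ[X] has no repeated root, and for all t ≠ t′ in {0,…,s} the polynomials f_t(X,1) and f_{t′}(X,1) have no common root. (This identifies the discriminant locus cut out of the FI parameter space: the tuple (f_0,…,f_s) is generic exactly when no f_t has a repeated root and no two of the f_t share a root.) -/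
/-!
With `z = U / V`, the `Z_t`-derivatives of `F_J` on the torus say that `f_t(z, 1) = 0` for all
`t ∈ J`, the `U`-derivative is `V^(N-1) ∑ Z_t f_t'(z, 1)`, and the `V`-derivative then vanishes
automatically by Euler's identity. So a critical point in the torus is a common root `z ≠ 0` of
the `f_t(X, 1)`, `t ∈ J`, at which `∑ c_t f_t'(z, 1) = 0` for some nonzero weights `c_t`.
For `J = {t}` this is a multiple root of `f_t(X, 1)`, and for `#J ≥ 2` it forces a common root.
Conversely a multiple root gives `J = {t}`, and a common simple root `z` of `f_t(X, 1)` and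
`f_{t'}(X, 1)` gives `J = {t, t'}` with weights `(f_{t'}'(z), -f_t'(z))`. Roots are never `0`
since the coefficient of `V^N` is nonzero.
-/
open MvPolynomial

/-- `F_J = Σ_{t∈J} f_t(U,V)·Z_t`, a polynomial in the variables `U, V` (the inl
coordinates) and `Z_t` for `t ∈ {0,…,s}` (the inr coordinates); only the `Z_t` with
`t ∈ J` actually occur. -/
noncomputable def FJ (s : ℕ) (f : Fin (s + 1) → MvPolynomial (Fin 2) ℂ)
    (J : Finset (Fin (s + 1))) : MvPolynomial (Fin 2 ⊕ Fin (s + 1)) ℂ :=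
  ∑ t ∈ J, (MvPolynomial.rename Sum.inl (f t)) * MvPolynomial.X (Sum.inr t)

/-- The one-variable polynomial `f_t(X, 1) ∈ ℂ[X]`. -/
noncomputable def dehom (f : MvPolynomial (Fin 2) ℂ) : Polynomial ℂ :=
  MvPolynomial.aeval ![Polynomial.X, 1] f

section Dehomogenization

lemma eval_dehom (f : MvPolynomial (Fin 2) ℂ) (a : ℂ) :
    (dehom f).eval a = eval ![a, 1] f := by
  induction f using MvPolynomial.induction_on with
  | C c => simp [dehom]
  | add p q hp hq => simp_all [dehom]
  | mul_X p i hp => fin_cases i <;> simp_all [dehom]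

lemma dehom_pderiv_zero (f : MvPolynomial (Fin 2) ℂ) :
    dehom (pderiv 0 f) = Polynomial.derivative (dehom f) := by
  induction f using MvPolynomial.induction_on with
  | C c => simp [dehom]
  | add p q hp hq => simp_all [dehom]
  | mul_X p i hp =>
    fin_cases i <;> simp_all [dehom]
    ring

variable {f : MvPolynomial (Fin 2) ℂ} {n : ℕ}

lemma natDegree_dehom_le (hf : f.IsHomogeneous n) : (dehom f).natDegree ≤ n := by
  rw [dehom, f.as_sum, map_sum]
  refine Polynomial.natDegree_sum_le_of_forall_le _ _ fun m hm => ?_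
  simp only [aeval_monomial, Finsupp.prod_fintype _ _ (fun _ => pow_zero _), Fin.prod_univ_two]
  have hdeg : m 0 + m 1 = n := by
    simpa [Finsupp.weight_apply, Finsupp.sum_fintype, Fin.sum_univ_two] using
      hf (mem_support_iff.mp hm)
  calc _ ≤ m 0 := by simpa using Polynomial.natDegree_C_mul_X_pow_le (coeff m f) (m 0)
    _ ≤ n := by omega

lemma homogenize_dehom (hf : f.IsHomogeneous n) : (dehom f).homogenize n = f :=
  Polynomial.homogenize_eq_of_isHomogeneous hf rfl

lemma eval_eq_eval_dehom (hf : f.IsHomogeneous n) {x : Fin 2 → ℂ} (hx : x 1 ≠ 0) :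
    eval x f = (dehom f).eval (x 0 / x 1) * x 1 ^ n := by
  conv_lhs => rw [← homogenize_dehom hf]
  exact Polynomial.eval_homogenize (natDegree_dehom_le hf) x hx

lemma eval_dehom_zero (hf : f.IsHomogeneous n) :
    (dehom f).eval 0 = coeff (Finsupp.single 1 n) f := by
  conv_rhs => rw [← homogenize_dehom hf]
  simp [Polynomial.coeff_homogenize, Polynomial.coeff_zero_eq_eval_zero]

/-- Euler's identity `U ∂_U f + V ∂_V f = n f`, evaluated at `(a, 1)`. -/
lemma eval_pderiv_one_eq (hf : f.IsHomogeneous n) (a : ℂ) :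
    eval ![a, 1] (pderiv 1 f)
      = n * (dehom f).eval a - a * (Polynomial.derivative (dehom f)).eval a := by
  have h := congrArg (eval ![a, 1]) hf.sum_X_mul_pderiv
  simp [Fin.sum_univ_two] at h
  rw [eval_dehom, ← dehom_pderiv_zero, eval_dehom]
  linear_combination h

end Dehomogenization

lemma pderiv_rename_of_notMem_range {σ τ R : Type*} [CommSemiring R] {g : σ → τ} {j : τ}
    (hj : j ∉ Set.range g) (p : MvPolynomial σ R) : pderiv j (rename g p) = 0 := by
  classical
  refine pderiv_eq_zero_of_notMem_vars fun h => hj ?_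
  obtain ⟨i, -, rfl⟩ := Finset.mem_image.mp (vars_rename g p h)
  exact ⟨i, rfl⟩

section CriticalPoints

variable {s : ℕ} (f : Fin (s + 1) → MvPolynomial (Fin 2) ℂ) (J : Finset (Fin (s + 1)))

lemma eval_pderiv_inr_FJ {t : Fin (s + 1)} (ht : t ∈ J) (x : Fin 2 ⊕ Fin (s + 1) → ℂ) :
    eval x (pderiv (Sum.inr t) (FJ s f J)) = eval (x ∘ Sum.inl) (f t) := by
  classical
  simp [FJ, pderiv_X, Pi.single_apply, pderiv_rename_of_notMem_range, ht, eval_rename]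

lemma eval_pderiv_inl_FJ (w : Fin 2) (x : Fin 2 ⊕ Fin (s + 1) → ℂ) :
    eval x (pderiv (Sum.inl w) (FJ s f J))
      = ∑ t ∈ J, x (Sum.inr t) * eval (x ∘ Sum.inl) (pderiv w (f t)) := by
  classical
  simp [FJ, pderiv_X, pderiv_rename Sum.inl_injective, eval_rename]

def IsCriticalPointInTorus (x : Fin 2 ⊕ Fin (s + 1) → ℂ) : Prop :=
  (x (Sum.inl 0) ≠ 0 ∧ x (Sum.inl 1) ≠ 0 ∧ ∀ t ∈ J, x (Sum.inr t) ≠ 0) ∧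
    (∀ w : Fin 2, eval x (pderiv (Sum.inl w) (FJ s f J)) = 0) ∧
    (∀ t ∈ J, eval x (pderiv (Sum.inr t) (FJ s f J)) = 0)

variable {f J} {N : Fin (s + 1) → ℕ} (hhom : ∀ t, (f t).IsHomogeneous (N t))
include hhom

lemma isCriticalPointInTorus_sumElim {z : ℂ} (hz : z ≠ 0) {c : Fin (s + 1) → ℂ}
    (hc : ∀ t ∈ J, c t ≠ 0) (hroot : ∀ t ∈ J, (dehom (f t)).IsRoot z)
    (hsum : ∑ t ∈ J, c t * (Polynomial.derivative (dehom (f t))).eval z = 0) :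
    IsCriticalPointInTorus f J (Sum.elim ![z, 1] c) := by
  have hcomp : Sum.elim ![z, 1] c ∘ Sum.inl = ![z, 1] := rfl
  refine ⟨⟨hz, one_ne_zero, hc⟩, fun w => ?_, fun t ht => ?_⟩
  · rw [eval_pderiv_inl_FJ, hcomp]
    fin_cases w
    · simpa [← eval_dehom, dehom_pderiv_zero] using hsum
    · calc _ = -z * ∑ t ∈ J, c t * (Polynomial.derivative (dehom (f t))).eval z := by
            rw [Finset.mul_sum]
            refine Finset.sum_congr rfl fun t ht => ?_
            simp [eval_pderiv_one_eq (hhom t), (hroot t ht).eq_zero]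
            ring
        _ = 0 := by rw [hsum, mul_zero]
  · rw [eval_pderiv_inr_FJ f J ht, hcomp, ← eval_dehom]
    exact hroot t ht

lemma exists_isCriticalPointInTorus_singleton {t : Fin (s + 1)} {z : ℂ} (hz : z ≠ 0)
    (hr : (dehom (f t)).IsRoot z) (hr' : (Polynomial.derivative (dehom (f t))).IsRoot z) :
    ∃ x, IsCriticalPointInTorus f {t} x :=
  ⟨_, isCriticalPointInTorus_sumElim hhom hz (c := 1) (by simp) (by simpa) (by simpa using hr')⟩

lemma exists_isCriticalPointInTorus_pair {t t' : Fin (s + 1)} (htt' : t ≠ t') {z : ℂ}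
    (hz : z ≠ 0) (hr : (dehom (f t)).IsRoot z) (hr' : (dehom (f t')).IsRoot z)
    (hd : ¬(Polynomial.derivative (dehom (f t))).IsRoot z)
    (hd' : ¬(Polynomial.derivative (dehom (f t'))).IsRoot z) :
    ∃ x, IsCriticalPointInTorus f {t, t'} x := by
  refine ⟨_, isCriticalPointInTorus_sumElim hhom hz
    (c := fun τ => if τ = t then (Polynomial.derivative (dehom (f t'))).eval z
      else -(Polynomial.derivative (dehom (f t))).eval z) ?_ ?_ ?_⟩
  · simpa [htt'.symm] using ⟨hd', hd⟩
  · simpa using ⟨hr, hr'⟩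
  · rw [Finset.sum_pair htt']
    simp [htt'.symm]
    ring

lemma IsCriticalPointInTorus.isRoot {x : Fin 2 ⊕ Fin (s + 1) → ℂ}
    (hx : IsCriticalPointInTorus f J x) {t : Fin (s + 1)} (ht : t ∈ J) :
    (dehom (f t)).IsRoot (x (Sum.inl 0) / x (Sum.inl 1)) := by
  have h := hx.2.2 t ht
  rw [eval_pderiv_inr_FJ f J ht, eval_eq_eval_dehom (hhom t) hx.1.2.1] at h
  exact (mul_eq_zero.mp h).resolve_right (pow_ne_zero _ hx.1.2.1)

lemma IsCriticalPointInTorus.isRoot_derivative {x : Fin 2 ⊕ Fin (s + 1) → ℂ} {t : Fin (s + 1)}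
    (hx : IsCriticalPointInTorus f {t} x) :
    (Polynomial.derivative (dehom (f t))).IsRoot (x (Sum.inl 0) / x (Sum.inl 1)) := by
  have h := hx.2.1 0
  rw [eval_pderiv_inl_FJ, Finset.sum_singleton,
    eval_eq_eval_dehom ((hhom t).pderiv) hx.1.2.1, dehom_pderiv_zero] at h
  simpa [hx.1.2.1, hx.1.2.2 t (Finset.mem_singleton_self t)] using h

end CriticalPoints

theorem stmt15_general (s : ℕ) (N : Fin (s + 1) → ℕ)
    (f : Fin (s + 1) → MvPolynomial (Fin 2) ℂ)
    (hhom : ∀ t, (f t).IsHomogeneous (N t))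
    (hV : ∀ t, MvPolynomial.coeff (Finsupp.single 1 (N t)) (f t) ≠ 0) :
    (∀ J : Finset (Fin (s + 1)), J.Nonempty →
        ¬∃ x : Fin 2 ⊕ Fin (s + 1) → ℂ,
          (x (Sum.inl 0) ≠ 0 ∧ x (Sum.inl 1) ≠ 0 ∧ ∀ t ∈ J, x (Sum.inr t) ≠ 0) ∧
          (∀ w : Fin 2, MvPolynomial.eval x (MvPolynomial.pderiv (Sum.inl w) (FJ s f J)) = 0) ∧
          (∀ t ∈ J, MvPolynomial.eval x (MvPolynomial.pderiv (Sum.inr t) (FJ s f J)) = 0)) ↔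
      ((∀ t, ∀ z : ℂ, Polynomial.rootMultiplicity z (dehom (f t)) ≤ 1) ∧
        (∀ t t' : Fin (s + 1), t ≠ t' → ∀ z : ℂ,
          ¬((dehom (f t)).IsRoot z ∧ (dehom (f t')).IsRoot z))) := by
  show (∀ J, J.Nonempty → ¬∃ x, IsCriticalPointInTorus f J x) ↔ _
  have hne : ∀ t, dehom (f t) ≠ 0 := fun t h =>
    hV t (by rw [← eval_dehom_zero (hhom t), h, Polynomial.eval_zero])
  have hroot_ne : ∀ t z, (dehom (f t)).IsRoot z → z ≠ 0 := by
    rintro t _ hr rfl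
    exact hV t (by rwa [← eval_dehom_zero (hhom t)])
  constructor
  · intro h
    have hsimple : ∀ t z, (dehom (f t)).IsRoot z →
        ¬(Polynomial.derivative (dehom (f t))).IsRoot z := fun t z hr hr' =>
      h {t} (Finset.singleton_nonempty t)
        (exists_isCriticalPointInTorus_singleton hhom (hroot_ne t z hr) hr hr')
    refine ⟨fun t z => ?_, fun t t' htt' z ⟨hr, hr'⟩ => h {t, t'} (Finset.insert_nonempty _ _)
      (exists_isCriticalPointInTorus_pair hhom htt' (hroot_ne t z hr) hr hr'
        (hsimple t z hr) (hsimple t' z hr'))⟩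
    by_contra! hlt
    obtain ⟨hr, hr'⟩ := (Polynomial.one_lt_rootMultiplicity_iff_isRoot (hne t)).mp hlt
    exact hsimple t z hr hr'
  · rintro ⟨hmult, hcommon⟩ J ⟨t, ht⟩ ⟨x, hx⟩
    rcases J.eq_singleton_or_nontrivial ht with rfl | hJ
    · exact (hmult t _).not_gt ((Polynomial.one_lt_rootMultiplicity_iff_isRoot (hne t)).mpr
        ⟨hx.isRoot hhom (Finset.mem_singleton_self t), hx.isRoot_derivative hhom⟩)
    · obtain ⟨t', ht', htt'⟩ := hJ.exists_ne t
      exact hcommon t' t htt' _ ⟨hx.isRoot hhom ht', hx.isRoot hhom ht⟩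

/-- The following are equivalent: (1) for every nonempty `J ⊆ {0,…,s}`, the polynomial
`F_J = Σ_{t∈J} f_t(U,V)·Z_t` has no critical point all of whose coordinates
(`U`, `V` and `Z_t` for `t ∈ J`) are nonzero; (2) each `f_t(X,1)` has no repeated root,
and no two of the `f_t(X,1)` share a common root. -/
theorem stmt15 (s : ℕ) (N : Fin (s + 1) → ℕ) (hN : ∀ t, 1 ≤ N t)
    (f : Fin (s + 1) → MvPolynomial (Fin 2) ℂ)
    (hhom : ∀ t, (f t).IsHomogeneous (N t))
    (hU : ∀ t, MvPolynomial.coeff (Finsupp.single 0 (N t)) (f t) ≠ 0)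
    (hV : ∀ t, MvPolynomial.coeff (Finsupp.single 1 (N t)) (f t) ≠ 0) :
    (∀ J : Finset (Fin (s + 1)), J.Nonempty →
        ¬∃ x : Fin 2 ⊕ Fin (s + 1) → ℂ,
          (x (Sum.inl 0) ≠ 0 ∧ x (Sum.inl 1) ≠ 0 ∧ ∀ t ∈ J, x (Sum.inr t) ≠ 0) ∧
          (∀ w : Fin 2, MvPolynomial.eval x (MvPolynomial.pderiv (Sum.inl w) (FJ s f J)) = 0) ∧
          (∀ t ∈ J, MvPolynomial.eval x (MvPolynomial.pderiv (Sum.inr t) (FJ s f J)) = 0)) ↔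
      ((∀ t, ∀ z : ℂ, Polynomial.rootMultiplicity z (dehom (f t)) ≤ 1) ∧
        (∀ t t' : Fin (s + 1), t ≠ t' → ∀ z : ℂ,
          ¬((dehom (f t)).IsRoot z ∧ (dehom (f t')).IsRoot z))) :=
  stmt15_general s N f hhom hV
end
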